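/- arXiv:2308.02246 — 6 statements merged into one kernel-verified Lean document; each statement's English description precedes it below -/
import Mathlib

section
/- Let N ⊆ ℝ^d be a Lebesgue-null set and, for i,j = 1,…,d, let η_{i,j} : ℝ^d \ N → ℝ^d be measurable and locally bounded with η_{i,j} = η_{j,i}. Then there exists a twice continuously differentiable function A : ℝ^d → ℝ^d with A(0) = 0 such that for every twice continuously differentiable function g : ℝ^d → ℝ satisfying ∂_i∂_j g(y) = ∇g(y)·η_{i,j}(y) for all i,j = 1,…,d and all y ∈ ℝ^d \ N, one has g(y) = g(0) + ∇g(0)·A(y) for all y ∈ ℝ^d. -/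
open MeasureTheory
open scoped RealInnerProductSpace Pointwise
namespace Stmt0Aux
variable {d : ℕ}



/-- Solution predicate, with PDE written via the second fderiv. -/
def IsSol (N : Set (EuclideanSpace ℝ (Fin d))) (η : Fin d → Fin d → EuclideanSpace ℝ (Fin d) → EuclideanSpace ℝ (Fin d))
    (g : EuclideanSpace ℝ (Fin d) → ℝ) : Prop :=
  ContDiff ℝ 2 g ∧ ∀ i j, ∀ y ∉ N,
    fderiv ℝ (fderiv ℝ g) y (EuclideanSpace.single i 1) (EuclideanSpace.single j 1)
      = fderiv ℝ g y (η i j y)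

variable {N : Set (EuclideanSpace ℝ (Fin d))}
  {η : Fin d → Fin d → EuclideanSpace ℝ (Fin d) → EuclideanSpace ℝ (Fin d)}

lemma contDiff_fderiv {g : EuclideanSpace ℝ (Fin d) → ℝ} (hg : ContDiff ℝ 2 g) :
    ContDiff ℝ 1 (fderiv ℝ g) :=
  hg.fderiv_right (m := 1) (by norm_num)

lemma isSol_const (c : ℝ) : IsSol N η (fun _ => c) := by
  refine ⟨contDiff_const, fun i j y hy => ?_⟩
  have h1 : fderiv ℝ (fun _ : EuclideanSpace ℝ (Fin d) => c) = fun _ => 0 := by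
    funext z; exact fderiv_const_apply c
  rw [h1]
  simp

lemma IsSol.add {g₁ g₂ : EuclideanSpace ℝ (Fin d) → ℝ} (h₁ : IsSol N η g₁) (h₂ : IsSol N η g₂) :
    IsSol N η (fun z => g₁ z + g₂ z) := by
  refine ⟨h₁.1.add h₂.1, fun i j y hy => ?_⟩
  have hd₁ : Differentiable ℝ g₁ := h₁.1.differentiable (by norm_num)
  have hd₂ : Differentiable ℝ g₂ := h₂.1.differentiable (by norm_num)
  have hD : fderiv ℝ (fun z => g₁ z + g₂ z) = fun z => fderiv ℝ g₁ z + fderiv ℝ g₂ z := by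
    funext z; exact fderiv_add (hd₁ z) (hd₂ z)
  have hD₁ : DifferentiableAt ℝ (fderiv ℝ g₁) y :=
    ((contDiff_fderiv h₁.1).differentiable (by norm_num)) y
  have hD₂ : DifferentiableAt ℝ (fderiv ℝ g₂) y :=
    ((contDiff_fderiv h₂.1).differentiable (by norm_num)) y
  rw [hD, fderiv_fun_add hD₁ hD₂]
  simp only [ContinuousLinearMap.add_apply]
  rw [h₁.2 i j y hy, h₂.2 i j y hy]

lemma IsSol.smul {g : EuclideanSpace ℝ (Fin d) → ℝ} (c : ℝ) (h : IsSol N η g) :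
    IsSol N η (fun z => c * g z) := by
  refine ⟨h.1.const_smul c, fun i j y hy => ?_⟩
  have hd : Differentiable ℝ g := h.1.differentiable (by norm_num)
  have hD : fderiv ℝ (fun z => c * g z) = fun z => c • fderiv ℝ g z := by
    funext z; exact fderiv_const_mul (hd z) c
  have hDd : DifferentiableAt ℝ (fderiv ℝ g) y :=
    ((contDiff_fderiv h.1).differentiable (by norm_num)) y
  rw [hD, fderiv_fun_const_smul hDd c]
  simp only [ContinuousLinearMap.coe_smul', Pi.smul_apply, ContinuousLinearMap.smul_apply,
    smul_eq_mul]
  rw [h.2 i j y hy]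

lemma IsSol.sub {g₁ g₂ : EuclideanSpace ℝ (Fin d) → ℝ} (h₁ : IsSol N η g₁) (h₂ : IsSol N η g₂) :
    IsSol N η (fun z => g₁ z - g₂ z) := by
  have := h₁.add (h₂.smul (-1))
  simpa [sub_eq_add_neg] using this

lemma IsSol.sum {ι : Type*} (s : Finset ι) (f : ι → EuclideanSpace ℝ (Fin d) → ℝ)
    (h : ∀ r ∈ s, IsSol N η (f r)) : IsSol N η (fun z => ∑ r ∈ s, f r z) := by
  classical
  induction s using Finset.induction_on with
  | empty => simpa using isSol_const 0
  | insert a s' hx ih =>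
      have h1 : IsSol N η (f a) := h a (Finset.mem_insert_self a s')
      have h2 : IsSol N η (fun z => ∑ r ∈ s', f r z) :=
        ih (fun r hr => h r (Finset.mem_insert_of_mem hr))
      have := h1.add h2
      simpa [Finset.sum_insert hx] using this



lemma good_ae (N' : Set (EuclideanSpace ℝ (Fin d))) (hm : MeasurableSet N')
    (h0 : volume N' = 0) :
    ∀ᵐ y : EuclideanSpace ℝ (Fin d),
      volume {t : ℝ | t ∈ Set.Ioo (0:ℝ) 1 ∧ t • y ∈ N'} = 0 := by
  set s : Set (ℝ × EuclideanSpace ℝ (Fin d)) :=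
    {p | p.1 ∈ Set.Ioo (0:ℝ) 1 ∧ p.1 • p.2 ∈ N'} with hs
  have hsmul : Measurable (fun p : ℝ × EuclideanSpace ℝ (Fin d) => p.1 • p.2) :=
    (continuous_fst.smul continuous_snd).measurable
  have hsm : MeasurableSet s := by
    have : s = (Prod.fst ⁻¹' Set.Ioo (0:ℝ) 1) ∩
        ((fun p : ℝ × EuclideanSpace ℝ (Fin d) => p.1 • p.2) ⁻¹' N') := rfl
    rw [this]
    exact (measurable_fst measurableSet_Ioo).inter (hsmul hm)
  have hprod : (volume.prod volume) s = 0 := by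
    rw [Measure.measure_prod_null hsm]
    refine Filter.Eventually.of_forall (fun t => ?_)
    by_cases ht : t ∈ Set.Ioo (0:ℝ) 1
    · have hpre : Prod.mk t ⁻¹' s = (fun y : EuclideanSpace ℝ (Fin d) => t • y) ⁻¹' N' := by
        ext z
        simp only [Set.mem_preimage, Set.mem_setOf_eq, hs]
        exact ⟨fun h => h.2, fun h => ⟨ht, h⟩⟩
      have ht0 : t ≠ 0 := ne_of_gt ht.1
      have hinv : (fun y : EuclideanSpace ℝ (Fin d) => t • y) ⁻¹' N'
          = t⁻¹ • N' := by
        ext z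
        constructor
        · intro hz
          exact ⟨t • z, hz, by simp [smul_smul, inv_mul_cancel₀ ht0]⟩
        · rintro ⟨u, hu, rfl⟩
          simpa [smul_smul, mul_inv_cancel₀ ht0] using hu
      show volume (Prod.mk t ⁻¹' s) = 0
      rw [hpre, hinv, Measure.addHaar_smul]
      simp [h0]
    · have hpre : Prod.mk t ⁻¹' s = ∅ := by
        ext z
        simp only [Set.mem_preimage, Set.mem_setOf_eq, hs, Set.mem_empty_iff_false, iff_false]
        exact fun h => ht h.1
      show volume (Prod.mk t ⁻¹' s) = 0
      simp [hpre]
  have hsm' : MeasurableSet (Prod.swap ⁻¹' s : Set (EuclideanSpace ℝ (Fin d) × ℝ)) :=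
    measurable_swap hsm
  have hswap : (volume.prod volume) (Prod.swap ⁻¹' s : Set (EuclideanSpace ℝ (Fin d) × ℝ)) = 0 := by
    have h1 : (volume.prod volume : Measure (EuclideanSpace ℝ (Fin d) × ℝ))
        = Measure.map Prod.swap ((volume : Measure ℝ).prod volume) := (Measure.prod_swap).symm
    rw [h1, Measure.map_apply measurable_swap hsm']
    have h2 : Prod.swap ⁻¹' (Prod.swap ⁻¹' s : Set (EuclideanSpace ℝ (Fin d) × ℝ)) = s := by
      ext p; simp
    rw [h2]; exact hprod
  have hae := (Measure.measure_prod_null hsm').1 hswap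
  filter_upwards [hae] with y hy
  have h3 : Prod.mk y ⁻¹' (Prod.swap ⁻¹' s : Set (EuclideanSpace ℝ (Fin d) × ℝ))
      = {t : ℝ | t ∈ Set.Ioo (0:ℝ) 1 ∧ t • y ∈ N'} := by
    ext t; simp [hs]
  rwa [h3] at hy

lemma dense_of_compl_null {α : Type*} [TopologicalSpace α] [MeasurableSpace α]
    (μ : Measure α) [μ.IsOpenPosMeasure] {s : Set α} (h : μ sᶜ = 0) : Dense s := by
  intro x
  rw [mem_closure_iff]
  intro o ho hx
  by_contra hne
  have hsub : o ⊆ sᶜ := by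
    intro z hz
    by_contra hzs
    exact hne ⟨z, hz, not_not.mp hzs⟩
  have hpos : 0 < μ o := ho.measure_pos μ ⟨x, hx⟩
  exact absurd (measure_mono_null hsub h) (ne_of_gt hpos)


lemma eq_sum_single (y : EuclideanSpace ℝ (Fin d)) :
    y = ∑ i, y i • EuclideanSpace.single i (1:ℝ) := by
  have h := (EuclideanSpace.basisFun (Fin d) ℝ).sum_repr y
  simp only [EuclideanSpace.basisFun_apply, EuclideanSpace.basisFun_repr] at h
  exact h.symm

lemma clm_apply_eq_sum (y : EuclideanSpace ℝ (Fin d)) {F : Type*} [NormedAddCommGroup F]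
    [NormedSpace ℝ F] (L : EuclideanSpace ℝ (Fin d) →L[ℝ] F) :
    L y = ∑ i, y i • L (EuclideanSpace.single i 1) := by
  conv_lhs => rw [eq_sum_single y]
  rw [map_sum]
  exact Finset.sum_congr rfl fun i _ => L.map_smul _ _

set_option maxHeartbeats 1000000 in
lemma uniq {N : Set (EuclideanSpace ℝ (Fin d))} (hN : volume N = 0)
    {η : Fin d → Fin d → EuclideanSpace ℝ (Fin d) → EuclideanSpace ℝ (Fin d)}
    (hloc : ∀ i j, ∀ B : Set (EuclideanSpace ℝ (Fin d)), Bornology.IsBounded B →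
      ∃ C : ℝ, ∀ y ∈ B \ N, ‖η i j y‖ ≤ C)
    {g : EuclideanSpace ℝ (Fin d) → ℝ} (hg : IsSol N η g)
    (h0 : g 0 = 0) (h0' : fderiv ℝ g 0 = 0) :
    ∀ y, g y = 0 := by
  classical
  set N' := toMeasurable volume N with hN'def
  have hNN' : N ⊆ N' := subset_toMeasurable _ _
  have hN'm : MeasurableSet N' := measurableSet_toMeasurable _ _
  have hN'0 : volume N' = 0 := by rw [hN'def, measure_toMeasurable]; exact hN
  have hae := good_ae N' hN'm hN'0
  set G : Set (EuclideanSpace ℝ (Fin d)) :=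
    {y | volume {t : ℝ | t ∈ Set.Ioo (0:ℝ) 1 ∧ t • y ∈ N'} = 0} with hGdef
  have hGc : volume Gᶜ = 0 := by
    rw [hGdef, Set.compl_setOf]
    exact ae_iff.mp hae
  have hdense : Dense G := dense_of_compl_null volume hGc
  have hcontg : Continuous g := hg.1.continuous
  suffices hyG : ∀ y ∈ G, g y = 0 by
    intro y
    have heq : g = fun _ => (0:ℝ) :=
      Continuous.ext_on hdense hcontg continuous_const (fun z hz => hyG z hz)
    simp [heq]
  intro y hyG
  have hyG' : volume {t : ℝ | t ∈ Set.Ioo (0:ℝ) 1 ∧ t • y ∈ N'} = 0 := hyG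
  have hball := Metric.isBounded_closedBall (x := (0 : EuclideanSpace ℝ (Fin d))) (r := ‖y‖)
  obtain ⟨C, hC0, hC⟩ : ∃ C : ℝ, 0 ≤ C ∧ ∀ i j,
      ∀ x ∈ Metric.closedBall (0:EuclideanSpace ℝ (Fin d)) ‖y‖ \ N, ‖η i j x‖ ≤ C := by
    choose F hF using fun p : Fin d × Fin d => hloc p.1 p.2 _ hball
    refine ⟨∑ p : Fin d × Fin d, max (F p) 0,
      Finset.sum_nonneg fun p _ => le_max_right _ _, ?_⟩
    intro i j x hx
    have h2 : max (F (i, j)) 0 ≤ ∑ p : Fin d × Fin d, max (F p) 0 :=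
      Finset.single_le_sum (f := fun p : Fin d × Fin d => max (F p) 0)
        (fun p _ => le_max_right _ _) (Finset.mem_univ (i, j))
    exact (hF (i, j) x hx).trans ((le_max_left _ _).trans h2)
  set Y : ℝ := ∑ i, |y i| with hYdef
  have hY0 : 0 ≤ Y := Finset.sum_nonneg (fun i _ => abs_nonneg _)
  set K : ℝ := Real.sqrt d * (Y * C) with hKdef
  set T := (InnerProductSpace.toDual ℝ (EuclideanSpace ℝ (Fin d))).symm with hTdef
  have hDc1 : ContDiff ℝ 1 (fderiv ℝ g) := contDiff_fderiv hg.1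
  have hDdiff : Differentiable ℝ (fderiv ℝ g) := hDc1.differentiable (by norm_num)
  have hHcont : Continuous (fderiv ℝ (fderiv ℝ g)) := hDc1.continuous_fderiv (by norm_num)
  set v : ℝ → EuclideanSpace ℝ (Fin d) := fun t => gradient g (t • y) with hvdef
  set w : ℝ → EuclideanSpace ℝ (Fin d) :=
    fun t => T ((fderiv ℝ (fderiv ℝ g) (t • y)) y) with hwdef
  have hline : ∀ t : ℝ, HasDerivAt (fun s : ℝ => s • y) y t := by
    intro t
    simpa using (hasDerivAt_id t).smul_const y
  have hv' : ∀ t, HasDerivAt v (w t) t := by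
    intro t
    have h1 : HasFDerivAt (fderiv ℝ g) (fderiv ℝ (fderiv ℝ g) (t • y)) (t • y) :=
      (hDdiff (t • y)).hasFDerivAt
    have h2 : HasDerivAt (fun s : ℝ => fderiv ℝ g (s • y))
        ((fderiv ℝ (fderiv ℝ g) (t • y)) y) t := h1.comp_hasDerivAt t (hline t)
    have h3 := (T.toContinuousLinearEquiv.toContinuousLinearMap.hasFDerivAt).comp_hasDerivAt t h2
    exact h3
  have hvcont : Continuous v := by
    have hd : Differentiable ℝ v := fun t => (hv' t).differentiableAt
    exact hd.continuous
  have hwcont : Continuous w := by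
    have h2 : Continuous fun t : ℝ => fderiv ℝ (fderiv ℝ g) (t • y) :=
      hHcont.comp (continuous_id.smul continuous_const)
    exact T.continuous.comp (h2.clm_apply continuous_const)
  have hTu : ∀ (u : StrongDual ℝ (EuclideanSpace ℝ (Fin d))) (j : Fin d),
      T u j = u (EuclideanSpace.single j 1) := by
    intro u j
    have h1 : ⟪T u, EuclideanSpace.single j (1:ℝ)⟫ = u (EuclideanSpace.single j 1) :=
      InnerProductSpace.toDual_symm_apply
    rw [EuclideanSpace.inner_single_right] at h1
    simpa using h1
  have hnormT : ∀ u, ‖T u‖ = ‖u‖ := fun u => T.norm_map u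
  have hcoord : ∀ t : ℝ, t • y ∉ N → t ∈ Set.Icc (0:ℝ) 1 → ‖w t‖ ≤ K * ‖v t‖ := by
    intro t hxN htI
    have hxball : t • y ∈ Metric.closedBall (0 : EuclideanSpace ℝ (Fin d)) ‖y‖ := by
      simp only [Metric.mem_closedBall, dist_zero_right]
      rw [norm_smul]
      have ht1 : |t| ≤ 1 := abs_le.mpr ⟨by linarith [htI.1], htI.2⟩
      calc ‖t‖ * ‖y‖ ≤ 1 * ‖y‖ := by
            refine mul_le_mul_of_nonneg_right ?_ (norm_nonneg _)
            simpa [Real.norm_eq_abs] using ht1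
        _ = ‖y‖ := one_mul _
    have hnormD : ‖fderiv ℝ g (t • y)‖ = ‖v t‖ := by
      have : v t = T (fderiv ℝ g (t • y)) := rfl
      rw [this, hnormT]
    have hcj : ∀ j, w t j = ∑ i, y i * fderiv ℝ g (t • y) (η i j (t • y)) := by
      intro j
      have h1 : w t j = ((fderiv ℝ (fderiv ℝ g) (t • y)) y) (EuclideanSpace.single j 1) :=
        hTu _ j
      have hy' : (fderiv ℝ (fderiv ℝ g) (t • y)) y
          = ∑ i, y i • (fderiv ℝ (fderiv ℝ g) (t • y)) (EuclideanSpace.single i 1) :=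
        clm_apply_eq_sum y _
      rw [h1, hy']
      rw [ContinuousLinearMap.sum_apply]
      refine Finset.sum_congr rfl fun i _ => ?_
      rw [ContinuousLinearMap.smul_apply, smul_eq_mul, hg.2 i j (t • y) hxN]
    have hbc : ∀ j, |w t j| ≤ Y * C * ‖v t‖ := by
      intro j
      rw [hcj j]
      calc |∑ i, y i * fderiv ℝ g (t • y) (η i j (t • y))|
          ≤ ∑ i, |y i * fderiv ℝ g (t • y) (η i j (t • y))| :=
            Finset.abs_sum_le_sum_abs _ _
        _ ≤ ∑ i, |y i| * (‖v t‖ * C) := by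
            refine Finset.sum_le_sum fun i _ => ?_
            rw [abs_mul]
            refine mul_le_mul_of_nonneg_left ?_ (abs_nonneg _)
            calc |fderiv ℝ g (t • y) (η i j (t • y))|
                ≤ ‖fderiv ℝ g (t • y)‖ * ‖η i j (t • y)‖ :=
                  (fderiv ℝ g (t • y)).le_opNorm _
              _ ≤ ‖fderiv ℝ g (t • y)‖ * C :=
                  mul_le_mul_of_nonneg_left (hC i j _ ⟨hxball, hxN⟩) (norm_nonneg _)
              _ = ‖v t‖ * C := by rw [hnormD]
        _ = Y * (‖v t‖ * C) := by rw [← Finset.sum_mul]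
        _ = Y * C * ‖v t‖ := by ring
    have hM0 : (0:ℝ) ≤ Y * C * ‖v t‖ := by positivity
    have h2 : ‖w t‖ ≤ Real.sqrt d * (Y * C * ‖v t‖) := by
      rw [EuclideanSpace.norm_eq]
      have h3 : ∑ j, ‖w t j‖ ^ 2 ≤ ∑ _j : Fin d, (Y * C * ‖v t‖) ^ 2 := by
        refine Finset.sum_le_sum fun j _ => ?_
        rw [Real.norm_eq_abs]
        exact pow_le_pow_left₀ (abs_nonneg _) (hbc j) 2
      calc Real.sqrt (∑ j, ‖w t j‖ ^ 2)
          ≤ Real.sqrt (∑ _j : Fin d, (Y * C * ‖v t‖) ^ 2) := Real.sqrt_le_sqrt h3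
        _ = Real.sqrt ((d : ℝ) * (Y * C * ‖v t‖) ^ 2) := by
            rw [Finset.sum_const, Finset.card_univ, Fintype.card_fin, nsmul_eq_mul]
        _ = Real.sqrt d * (Y * C * ‖v t‖) := by
            rw [Real.sqrt_mul (by positivity), Real.sqrt_sq hM0]
    calc ‖w t‖ ≤ Real.sqrt d * (Y * C * ‖v t‖) := h2
      _ = K * ‖v t‖ := by rw [hKdef]; ring
  have hIoo : ∀ t ∈ Set.Ioo (0:ℝ) 1, ‖w t‖ ≤ K * ‖v t‖ := by
    by_contra hcon
    push_neg at hcon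
    obtain ⟨t₀, ht₀, hlt⟩ := hcon
    set U : Set ℝ := {t | K * ‖v t‖ < ‖w t‖} ∩ Set.Ioo 0 1 with hUdef
    have hUopen : IsOpen U :=
      (isOpen_lt (continuous_const.mul hvcont.norm) hwcont.norm).inter isOpen_Ioo
    have hUne : U.Nonempty := ⟨t₀, hlt, ht₀⟩
    have hUsub : U ⊆ {t : ℝ | t ∈ Set.Ioo (0:ℝ) 1 ∧ t • y ∈ N'} := by
      rintro t ⟨ht1, ht2⟩
      refine ⟨ht2, ?_⟩
      by_contra htN
      have htN2 : t • y ∉ N := fun hh => htN (hNN' hh)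
      have := hcoord t htN2 ⟨le_of_lt ht2.1, le_of_lt ht2.2⟩
      exact absurd this (not_le.mpr ht1)
    exact absurd (measure_mono_null hUsub hyG')
      (ne_of_gt (hUopen.measure_pos volume hUne))
  have hIcc : ∀ t ∈ Set.Icc (0:ℝ) 1, ‖w t‖ ≤ K * ‖v t‖ := by
    have hclosed : IsClosed {t : ℝ | ‖w t‖ ≤ K * ‖v t‖} :=
      isClosed_le hwcont.norm (continuous_const.mul hvcont.norm)
    have hsub : Set.Icc (0:ℝ) 1 ⊆ {t : ℝ | ‖w t‖ ≤ K * ‖v t‖} := by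
      rw [← closure_Ioo (zero_ne_one)]
      exact closure_minimal (fun t ht => hIoo t ht) hclosed
    exact fun t ht => hsub ht
  have hv0 : v 0 = 0 := by
    have : v 0 = T (fderiv ℝ g ((0:ℝ) • y)) := rfl
    rw [this, zero_smul, h0', map_zero]
  have hgron := norm_le_gronwallBound_of_norm_deriv_right_le (f := v) (f' := w)
    (δ := 0) (K := K) (ε := 0) (a := 0) (b := 1)
    hvcont.continuousOn (fun t _ => (hv' t).hasDerivWithinAt)
    (by simp [hv0])
    (fun t ht => by simpa using hIcc t (Set.mem_Icc_of_Ico ht))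
  have hvzero : ∀ t ∈ Set.Icc (0:ℝ) 1, v t = 0 := by
    intro t ht
    have h4 := hgron t ht
    rw [gronwallBound_ε0_δ0] at h4
    exact norm_le_zero_iff.mp h4
  have hgdiff : Differentiable ℝ g := hg.1.differentiable (by norm_num)
  have hφ' : ∀ t ∈ Set.Ico (0:ℝ) 1,
      HasDerivWithinAt (fun s : ℝ => g (s • y)) 0 (Set.Ici t) t := by
    intro t ht
    have h1 : HasDerivAt (fun s : ℝ => g (s • y)) ((fderiv ℝ g (t • y)) y) t :=
      (hgdiff (t • y)).hasFDerivAt.comp_hasDerivAt t (hline t)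
    have h4 : fderiv ℝ g (t • y) = 0 := by
      have h3 : T (fderiv ℝ g (t • y)) = 0 := hvzero t (Set.mem_Icc_of_Ico ht)
      exact T.injective (by rw [map_zero]; exact h3)
    have h2 : (fderiv ℝ g (t • y)) y = 0 := by rw [h4]; rfl
    exact (h2 ▸ h1).hasDerivWithinAt
  have hconst := constant_of_has_deriv_right_zero
    ((hcontg.comp (continuous_id.smul continuous_const)).continuousOn) hφ'
  have hfin := hconst 1 (by norm_num)
  simpa [h0] using hfin

lemma inner_gradient (f : EuclideanSpace ℝ (Fin d) → ℝ) (x v : EuclideanSpace ℝ (Fin d)) :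
    ⟪gradient f x, v⟫ = fderiv ℝ f x v := by
  simp [gradient, InnerProductSpace.toDual_symm_apply]

lemma second_deriv {g : EuclideanSpace ℝ (Fin d) → ℝ} (hg : ContDiff ℝ 2 g)
    (x u w : EuclideanSpace ℝ (Fin d)) :
    fderiv ℝ (fun z => fderiv ℝ g z u) x w = fderiv ℝ (fderiv ℝ g) x w u := by
  have hD : DifferentiableAt ℝ (fderiv ℝ g) x :=
    ((contDiff_fderiv hg).differentiable (by norm_num)).differentiableAt
  have h1 : HasFDerivAt (fun z => fderiv ℝ g z u)
      ((fderiv ℝ (fderiv ℝ g) x).flip u) x := by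
    have := hD.hasFDerivAt.clm_apply (hasFDerivAt_const u x)
    simpa using this
  rw [h1.fderiv]
  rfl

/-- The space of initial gradients of solutions vanishing at `0`. -/
def V (N : Set (EuclideanSpace ℝ (Fin d)))
    (η : Fin d → Fin d → EuclideanSpace ℝ (Fin d) → EuclideanSpace ℝ (Fin d)) :
    Submodule ℝ (EuclideanSpace ℝ (Fin d)) where
  carrier := {v | ∃ g, IsSol N η g ∧ g 0 = 0 ∧ gradient g 0 = v}
  zero_mem' := by
    refine ⟨fun _ => 0, isSol_const 0, rfl, ?_⟩
    show (InnerProductSpace.toDual ℝ (EuclideanSpace ℝ (Fin d))).symm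
      (fderiv ℝ (fun _ : EuclideanSpace ℝ (Fin d) => (0:ℝ)) 0) = 0
    rw [fderiv_const_apply, map_zero]
  add_mem' := by
    rintro v₁ v₂ ⟨g₁, hs₁, h01, hg1⟩ ⟨g₂, hs₂, h02, hg2⟩
    refine ⟨fun z => g₁ z + g₂ z, hs₁.add hs₂, by simp [h01, h02], ?_⟩
    show (InnerProductSpace.toDual ℝ (EuclideanSpace ℝ (Fin d))).symm
      (fderiv ℝ (fun z => g₁ z + g₂ z) 0) = v₁ + v₂
    rw [fderiv_fun_add (((hs₁.1.differentiable (by norm_num))) 0)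
      (((hs₂.1.differentiable (by norm_num))) 0), map_add]
    rw [← hg1, ← hg2]
    rfl
  smul_mem' := by
    rintro c v ⟨g, hs, h0g, hgv⟩
    refine ⟨fun z => c * g z, hs.smul c, by simp [h0g], ?_⟩
    show (InnerProductSpace.toDual ℝ (EuclideanSpace ℝ (Fin d))).symm
      (fderiv ℝ (fun z => c * g z) 0) = c • v
    rw [fderiv_const_mul (((hs.1.differentiable (by norm_num))) 0) c, map_smulₛₗ]
    rw [← hgv]
    simp [gradient]

end Stmt0Aux

open Stmt0Aux in
/-- Let `N ⊆ ℝ^d` be a Lebesgue-null set and, for `i,j = 1,…,d`, let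
`η i j : ℝ^d \ N → ℝ^d` be measurable and locally bounded with `η i j = η j i`.  Then there
exists a `C²` function `A : ℝ^d → ℝ^d` with `A 0 = 0` such that every `C²` function
`g : ℝ^d → ℝ` satisfying `∂_i ∂_j g (y) = ∇g(y) ⬝ η i j y` off `N` satisfies
`g y = g 0 + ∇g(0) ⬝ A y` everywhere. -/
theorem stmt0 (d : ℕ)
    (N : Set (EuclideanSpace ℝ (Fin d))) (hN : volume N = 0)
    (η : Fin d → Fin d → EuclideanSpace ℝ (Fin d) → EuclideanSpace ℝ (Fin d))
    (hη_meas : ∀ i j, Measurable (η i j))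
    (hη_locbdd : ∀ i j, ∀ B : Set (EuclideanSpace ℝ (Fin d)), Bornology.IsBounded B →
      ∃ C : ℝ, ∀ y ∈ B \ N, ‖η i j y‖ ≤ C)
    (hη_symm : ∀ i j, ∀ y ∉ N, η i j y = η j i y) :
    ∃ A : EuclideanSpace ℝ (Fin d) → EuclideanSpace ℝ (Fin d),
      ContDiff ℝ 2 A ∧ A 0 = 0 ∧
      ∀ g : EuclideanSpace ℝ (Fin d) → ℝ, ContDiff ℝ 2 g →
        (∀ i j, ∀ y ∉ N,
          fderiv ℝ (fun z => fderiv ℝ g z (EuclideanSpace.single j 1)) y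
              (EuclideanSpace.single i 1)
            = ⟪gradient g y, η i j y⟫) →
        ∀ y, g y = g 0 + ⟪gradient g 0, A y⟫ := by
  classical
  set b := stdOrthonormalBasis ℝ (V N η) with hbdef
  have hmem : ∀ r, ∃ g, IsSol N η g ∧ g 0 = 0 ∧
      gradient g 0 = ((b r : EuclideanSpace ℝ (Fin d))) := fun r => (b r).2
  choose sol hsol1 hsol2 hsol3 using hmem
  refine ⟨fun z => ∑ r, sol r z • ((b r : EuclideanSpace ℝ (Fin d))), ?_, ?_, ?_⟩
  · exact ContDiff.sum fun r _ => ((hsol1 r).1.smul contDiff_const)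
  · simp [hsol2]
  · intro g hg2 hpde
    have hgs : IsSol N η g := by
      refine ⟨hg2, fun i j z hz => ?_⟩
      rw [← second_deriv hg2 z (EuclideanSpace.single j 1) (EuclideanSpace.single i 1),
        hpde i j z hz]
      exact inner_gradient g z (η i j z)
    have hv0mem : gradient g 0 ∈ V N η := by
      refine ⟨fun z => g z - g 0, hgs.sub (isSol_const (g 0)), by simp, ?_⟩
      show (InnerProductSpace.toDual ℝ (EuclideanSpace ℝ (Fin d))).symm
        (fderiv ℝ (fun z => g z - g 0) 0) = gradient g 0
      rw [fderiv_sub_const]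
      rfl
    set c : Fin (Module.finrank ℝ (V N η)) → ℝ :=
      fun r => fderiv ℝ g 0 ((b r : EuclideanSpace ℝ (Fin d))) with hcdef
    have hexp : gradient g 0 = ∑ r, c r • ((b r : EuclideanSpace ℝ (Fin d))) := by
      have h1 := b.sum_repr ⟨gradient g 0, hv0mem⟩
      have h2 := congrArg
        (fun u : V N η => (u : EuclideanSpace ℝ (Fin d))) h1
      simp only at h2
      rw [Submodule.coe_sum] at h2
      refine h2.symm.trans ?_
      refine Finset.sum_congr rfl fun r _ => ?_
      rw [SetLike.val_smul]
      congr 1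
      rw [b.repr_apply_apply, Submodule.coe_inner]
      show ⟪((b r : EuclideanSpace ℝ (Fin d))), gradient g 0⟫ = c r
      rw [real_inner_comm, inner_gradient]
    set h : EuclideanSpace ℝ (Fin d) → ℝ :=
      fun z => g z - (g 0 + ∑ r, c r * sol r z) with hhdef
    have hhsol : IsSol N η h :=
      hgs.sub ((isSol_const (g 0)).add
        (IsSol.sum Finset.univ _ (fun r _ => (hsol1 r).smul (c r))))
    have hh0 : h 0 = 0 := by simp [hhdef, hsol2]
    have hDsum : HasFDerivAt (fun z => g 0 + ∑ r, c r * sol r z)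
        (∑ r, c r • fderiv ℝ (sol r) 0) 0 := by
      refine HasFDerivAt.const_add (g 0) ?_
      refine HasFDerivAt.fun_sum (fun r _ => ?_)
      exact ((((hsol1 r).1.differentiable (by norm_num)) 0).hasFDerivAt).const_mul (c r)
    have hDh : HasFDerivAt h (fderiv ℝ g 0 - ∑ r, c r • fderiv ℝ (sol r) 0) 0 :=
      (((hg2.differentiable (by norm_num)) 0).hasFDerivAt).sub hDsum
    have hkey : fderiv ℝ g 0 = ∑ r, c r • fderiv ℝ (sol r) 0 := by
      apply (InnerProductSpace.toDual ℝ (EuclideanSpace ℝ (Fin d))).symm.injective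
      show gradient g 0 = (InnerProductSpace.toDual ℝ (EuclideanSpace ℝ (Fin d))).symm _
      rw [hexp, map_sum]
      refine Finset.sum_congr rfl fun r _ => ?_
      rw [map_smulₛₗ]
      have : (InnerProductSpace.toDual ℝ (EuclideanSpace ℝ (Fin d))).symm
          (fderiv ℝ (sol r) 0) = ((b r : EuclideanSpace ℝ (Fin d))) := hsol3 r
      rw [this]
      simp
    have hDh0 : fderiv ℝ h 0 = 0 := by
      rw [hDh.fderiv, hkey, sub_self]
    have huniq := uniq hN hη_locbdd hhsol hh0 hDh0
    intro z
    have hz := huniq z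
    have hz2 : g z = g 0 + ∑ r, c r * sol r z := by
      have : g z - (g 0 + ∑ r, c r * sol r z) = 0 := hz
      linarith
    rw [hz2]
    congr 1
    rw [inner_gradient, map_sum]
    refine Finset.sum_congr rfl fun r _ => ?_
    rw [(fderiv ℝ g 0).map_smul]
    simp [hcdef, mul_comm]
end

section
/- Let R > 0, C ≥ 0, and for i,j = 1,…,d let η_{i,j} : ℝ^d → ℝ^d satisfy |η_{i,j}(y)| ≤ C for all |y| ≤ R. Let h : ℝ^d → ℝ be twice continuously differentiable with ∂_i∂_j h(y) = ∇h(y)·η_{i,j}(y) for all i,j = 1,…,d and all y with |y| ≤ R. Then |∇h(x)| ≤ |∇h(0)|·exp(C d² |x|) for every x ∈ ℝ^d with |x| ≤ R. -/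
open scoped RealInnerProductSpace

/-- Gronwall-type bound: if `‖η i j y‖ ≤ C` for `‖y‖ ≤ R` and `h` is `C²`
with `∂_i ∂_j h (y) = ∇h(y) ⬝ η i j y` for `‖y‖ ≤ R`, then
`‖∇h(x)‖ ≤ ‖∇h(0)‖ · exp(C d² ‖x‖)` for `‖x‖ ≤ R`. -/
theorem stmt1 (d : ℕ) (R C : ℝ) (hR : 0 < R) (hC : 0 ≤ C)
    (η : Fin d → Fin d → EuclideanSpace ℝ (Fin d) → EuclideanSpace ℝ (Fin d))
    (hη_bdd : ∀ i j, ∀ y : EuclideanSpace ℝ (Fin d), ‖y‖ ≤ R → ‖η i j y‖ ≤ C)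
    (h : EuclideanSpace ℝ (Fin d) → ℝ) (hh : ContDiff ℝ 2 h)
    (hpde : ∀ i j, ∀ y : EuclideanSpace ℝ (Fin d), ‖y‖ ≤ R →
      fderiv ℝ (fun z => fderiv ℝ h z (EuclideanSpace.single j 1)) y
          (EuclideanSpace.single i 1)
        = ⟪gradient h y, η i j y⟫) :
    ∀ x : EuclideanSpace ℝ (Fin d), ‖x‖ ≤ R →
      ‖gradient h x‖ ≤ ‖gradient h 0‖ * Real.exp (C * (d : ℝ) ^ 2 * ‖x‖) := by
  classical
  set G : EuclideanSpace ℝ (Fin d) → EuclideanSpace ℝ (Fin d) := gradient h with hGdef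
  have hG1 : ContDiff ℝ 1 G := by
    have hGe : G = fun y => (InnerProductSpace.toDual ℝ (EuclideanSpace ℝ (Fin d))).symm
        (fderiv ℝ h y) := rfl
    rw [hGe]
    exact ((InnerProductSpace.toDual ℝ _).symm.toContinuousLinearEquiv.contDiff).comp
      (hh.fderiv_right (by norm_num))
  have hGdiff : Differentiable ℝ G := hG1.differentiable one_ne_zero
  have hinner : ∀ y v : EuclideanSpace ℝ (Fin d), ⟪G y, v⟫ = fderiv ℝ h y v := fun y v =>
    InnerProductSpace.toDual_symm_apply
  have hDinner : ∀ (w y v : EuclideanSpace ℝ (Fin d)),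
      fderiv ℝ (fun z => (⟪G z, w⟫ : ℝ)) y v = ⟪fderiv ℝ G y v, w⟫ := by
    intro w y v
    have h1 : HasFDerivAt (fun z => (⟪G z, w⟫ : ℝ))
        (((innerSL ℝ).flip w).comp (fderiv ℝ G y)) y :=
      (((innerSL ℝ (E := EuclideanSpace ℝ (Fin d))).flip w).hasFDerivAt).comp y
        (hGdiff y).hasFDerivAt
    rw [h1.fderiv]
    rfl
  have key : ∀ y : EuclideanSpace ℝ (Fin d), ‖y‖ ≤ R →
      ∀ v : EuclideanSpace ℝ (Fin d),
      ‖fderiv ℝ G y v‖ ≤ C * (d : ℝ) ^ 2 * ‖v‖ * ‖G y‖ := by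
    intro y hy v
    set w := fderiv ℝ G y v with hw
    have hB : (0:ℝ) ≤ C * d * ‖v‖ * ‖G y‖ := by positivity
    have hcomp : ∀ j : Fin d, |w j| ≤ C * d * ‖v‖ * ‖G y‖ := by
      intro j
      have e1 : w j = ⟪w, EuclideanSpace.single j (1:ℝ)⟫ := by
        rw [EuclideanSpace.inner_single_right]; simp
      have e2 : (fun z => fderiv ℝ h z (EuclideanSpace.single j (1:ℝ)))
          = fun z => (⟪G z, EuclideanSpace.single j (1:ℝ)⟫ : ℝ) := by
        funext z; rw [hinner]
      have e3 : (⟪w, EuclideanSpace.single j (1:ℝ)⟫ : ℝ)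
          = fderiv ℝ (fun z => fderiv ℝ h z (EuclideanSpace.single j (1:ℝ))) y v := by
        rw [e2, hDinner]
      have e4 : v = ∑ i, v i • EuclideanSpace.single i (1:ℝ) := by
        ext k
        rw [WithLp.ofLp_sum, Finset.sum_apply]
        simp [EuclideanSpace.single_apply]
      have e5 : fderiv ℝ (fun z => fderiv ℝ h z (EuclideanSpace.single j (1:ℝ))) y v
          = ∑ i, v i * ⟪G y, η i j y⟫ := by
        conv_lhs => rw [e4]
        rw [map_sum]
        congr 1
        funext i
        rw [map_smul, hpde i j y hy]
        simp
      rw [e1, e3, e5]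
      have habs : ∀ i : Fin d, |v i| ≤ ‖v‖ := by
        intro i
        have h1 : (⟪v, EuclideanSpace.single i (1:ℝ)⟫ : ℝ) = v i := by
          rw [EuclideanSpace.inner_single_right]; simp
        calc |v i| = |(⟪v, EuclideanSpace.single i (1:ℝ)⟫ : ℝ)| := by rw [h1]
          _ ≤ ‖v‖ * ‖EuclideanSpace.single i (1:ℝ)‖ := abs_real_inner_le_norm _ _
          _ = ‖v‖ := by rw [EuclideanSpace.norm_single]; simp
      calc |∑ i, v i * ⟪G y, η i j y⟫| ≤ ∑ i, |v i * ⟪G y, η i j y⟫| :=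
            Finset.abs_sum_le_sum_abs _ _
        _ ≤ ∑ _i : Fin d, ‖v‖ * (‖G y‖ * C) := by
            apply Finset.sum_le_sum
            intro i _
            rw [abs_mul]
            have h2 : |(⟪G y, η i j y⟫ : ℝ)| ≤ ‖G y‖ * C := by
              calc |(⟪G y, η i j y⟫ : ℝ)| ≤ ‖G y‖ * ‖η i j y‖ := abs_real_inner_le_norm _ _
                _ ≤ ‖G y‖ * C := by
                    exact mul_le_mul_of_nonneg_left (hη_bdd i j y hy) (norm_nonneg _)
            exact mul_le_mul (habs i) h2 (abs_nonneg _) (norm_nonneg _)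
        _ = C * d * ‖v‖ * ‖G y‖ := by
            rw [Finset.sum_const, Finset.card_univ, Fintype.card_fin, nsmul_eq_mul]
            ring
    -- now norm bound
    rw [EuclideanSpace.norm_eq]
    set B := C * d * ‖v‖ * ‖G y‖ with hBdef
    have hsum : ∑ j, ‖w j‖ ^ 2 ≤ ∑ _j : Fin d, B ^ 2 := by
      apply Finset.sum_le_sum
      intro j _
      have := hcomp j
      rw [Real.norm_eq_abs]
      nlinarith [abs_nonneg (w j)]
    have hfin : √(∑ j, ‖w j‖ ^ 2) ≤ d * B := by
      calc √(∑ j, ‖w j‖ ^ 2) ≤ √(∑ _j : Fin d, B ^ 2) := Real.sqrt_le_sqrt hsum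
        _ = √(d * B ^ 2) := by rw [Finset.sum_const, Finset.card_univ]; simp [nsmul_eq_mul]
        _ ≤ √((d * B) ^ 2) := by
            apply Real.sqrt_le_sqrt
            have hd : (d:ℝ) ≤ (d:ℝ)^2 := by
              rcases Nat.eq_zero_or_pos d with h0 | h1
              · simp [h0]
              · have : (1:ℝ) ≤ d := by exact_mod_cast h1
                nlinarith
            nlinarith [sq_nonneg B]
        _ = d * B := Real.sqrt_sq (by positivity)
    calc √(∑ j, ‖w j‖ ^ 2) ≤ d * B := hfin
      _ = C * (d:ℝ)^2 * ‖v‖ * ‖G y‖ := by rw [hBdef]; ring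
  -- Gronwall along the segment
  intro x hx
  set K := C * (d : ℝ) ^ 2 * ‖x‖ with hK
  have hf : ContinuousOn (fun t : ℝ => G (t • x)) (Set.Icc 0 1) :=
    (hGdiff.continuous.comp (continuous_id.smul continuous_const)).continuousOn
  have hf' : ∀ t ∈ Set.Ico (0:ℝ) 1, HasDerivWithinAt (fun t : ℝ => G (t • x))
      (fderiv ℝ G (t • x) x) (Set.Ici t) t := by
    intro t _
    have hsm : HasDerivAt (fun t : ℝ => t • x) x t := by
      simpa using (hasDerivAt_id t).smul_const x
    exact ((hGdiff (t • x)).hasFDerivAt.comp_hasDerivAt t hsm).hasDerivWithinAt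
  have hbound : ∀ t ∈ Set.Ico (0:ℝ) 1,
      ‖fderiv ℝ G (t • x) x‖ ≤ K * ‖G (t • x)‖ + 0 := by
    intro t ht
    have hty : ‖t • x‖ ≤ R := by
      rw [norm_smul, Real.norm_eq_abs, abs_of_nonneg ht.1]
      calc t * ‖x‖ ≤ 1 * ‖x‖ := by
            exact mul_le_mul_of_nonneg_right ht.2.le (norm_nonneg x)
        _ = ‖x‖ := one_mul _
        _ ≤ R := hx
    have := key (t • x) hty x
    rw [add_zero, hK]
    exact this
  have hg := norm_le_gronwallBound_of_norm_deriv_right_le hf hf' le_rfl hbound 1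
    (Set.right_mem_Icc.mpr zero_le_one)
  simp only [one_smul, zero_smul, sub_zero] at hg
  rw [gronwallBound_ε0, mul_one] at hg
  exact hg
end

section
/- For i,j = 1,…,d let η_{i,j} : ℝ^d → ℝ^d be locally bounded, and let h : ℝ^d → ℝ be twice continuously differentiable with ∂_i∂_j h(y) = ∇h(y)·η_{i,j}(y) for all i,j = 1,…,d and all y ∈ ℝ^d. If h(0) = 0 and ∇h(0) = 0, then h is identically zero on ℝ^d. -/
open scoped RealInnerProductSpace

lemma stmt2_sum_single (d : ℕ) (x : EuclideanSpace ℝ (Fin d)) :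
    ∑ i, x i • EuclideanSpace.single i (1:ℝ) = x := by
  simpa [EuclideanSpace.basisFun_apply, EuclideanSpace.basisFun_repr] using
    (EuclideanSpace.basisFun (Fin d) ℝ).sum_repr x

lemma stmt2_opnorm_le_sum (d : ℕ) (L : EuclideanSpace ℝ (Fin d) →L[ℝ] ℝ) :
    ‖L‖ ≤ ∑ j, ‖L (EuclideanSpace.single j 1)‖ := by
  refine L.opNorm_le_bound (Finset.sum_nonneg fun _ _ => norm_nonneg _) fun x => ?_
  conv_lhs => rw [← stmt2_sum_single d x, map_sum]
  calc ‖∑ i, L (x i • EuclideanSpace.single i 1)‖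
      ≤ ∑ i, ‖L (x i • EuclideanSpace.single i 1)‖ := norm_sum_le _ _
    _ ≤ ∑ i, ‖L (EuclideanSpace.single i 1)‖ * ‖x‖ := by
        refine Finset.sum_le_sum fun i _ => ?_
        rw [map_smul, smul_eq_mul, norm_mul]
        have hxi : |x i| ≤ ‖x‖ := by
          have := abs_real_inner_le_norm (EuclideanSpace.single i (1:ℝ)) x
          simpa [EuclideanSpace.inner_single_left, EuclideanSpace.norm_single] using this
        calc ‖x i‖ * ‖L (EuclideanSpace.single i 1)‖
            ≤ ‖x‖ * ‖L (EuclideanSpace.single i 1)‖ := by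
              exact mul_le_mul_of_nonneg_right (by simpa using hxi) (norm_nonneg _)
          _ = ‖L (EuclideanSpace.single i 1)‖ * ‖x‖ := mul_comm _ _
    _ = (∑ i, ‖L (EuclideanSpace.single i 1)‖) * ‖x‖ := (Finset.sum_mul ..).symm

/-- If `η i j : ℝ^d → ℝ^d` are locally bounded and `h : ℝ^d → ℝ` is `C²`
with `∂_i ∂_j h(y) = ∇h(y) ⬝ η i j y` everywhere, then `h 0 = 0` and `∇h(0) = 0` imply
`h ≡ 0`. -/
theorem stmt2 (d : ℕ)
    (η : Fin d → Fin d → EuclideanSpace ℝ (Fin d) → EuclideanSpace ℝ (Fin d))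
    (hη_locbdd : ∀ i j, ∀ B : Set (EuclideanSpace ℝ (Fin d)), Bornology.IsBounded B →
      ∃ C : ℝ, ∀ y ∈ B, ‖η i j y‖ ≤ C)
    (h : EuclideanSpace ℝ (Fin d) → ℝ) (hh : ContDiff ℝ 2 h)
    (hpde : ∀ i j, ∀ y : EuclideanSpace ℝ (Fin d),
      fderiv ℝ (fun z => fderiv ℝ h z (EuclideanSpace.single j 1)) y
          (EuclideanSpace.single i 1)
        = ⟪gradient h y, η i j y⟫)
    (h0 : h 0 = 0) (hgrad0 : gradient h 0 = 0) :
    ∀ y, h y = 0 := by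
  intro y
  classical
  have hdiff1 : ContDiff ℝ 1 (fderiv ℝ h) := hh.fderiv_right (by norm_num)
  have hgradnorm : ∀ w : EuclideanSpace ℝ (Fin d),
      ‖gradient h w‖ = ‖fderiv ℝ h w‖ := fun w => by simp [gradient]
  -- local bounds on η over the closed ball of radius ‖y‖
  have hball : Bornology.IsBounded
      (Metric.closedBall (0 : EuclideanSpace ℝ (Fin d)) ‖y‖) := Metric.isBounded_closedBall
  choose C hC using fun i j => hη_locbdd i j _ hball
  set K : ℝ := ∑ j, ∑ i, |y i| * C i j with hKdef
  -- the curve of derivatives along t ↦ t • y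
  set F : ℝ → (EuclideanSpace ℝ (Fin d) →L[ℝ] ℝ) := fun t => fderiv ℝ h (t • y) with hFdef
  set F' : ℝ → (EuclideanSpace ℝ (Fin d) →L[ℝ] ℝ) :=
    fun t => (fderiv ℝ (fderiv ℝ h) (t • y)) y with hF'def
  have hz : ∀ t : ℝ, HasDerivAt (fun s : ℝ => s • y) y t := fun t => by
    simpa using (hasDerivAt_id t).smul_const y
  have hFderiv : ∀ t : ℝ, HasDerivAt F (F' t) t := fun t =>
    ((hdiff1.differentiable (by norm_num) (t • y)).hasFDerivAt).comp_hasDerivAt t (hz t)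
  -- the second derivative in coordinates, via the PDE
  have key : ∀ (w : EuclideanSpace ℝ (Fin d)) (i j : Fin d),
      fderiv ℝ (fderiv ℝ h) w (EuclideanSpace.single i 1) (EuclideanSpace.single j 1)
        = ⟪gradient h w, η i j w⟫ := by
    intro w i j
    have hcomp : fderiv ℝ (fun z => fderiv ℝ h z (EuclideanSpace.single j 1)) w
        = (fderiv ℝ (fderiv ℝ h) w).flip (EuclideanSpace.single j 1) := by
      rw [fderiv_clm_apply (hdiff1.differentiable (by norm_num) w) (differentiableAt_const _)]
      simp
    rw [← hpde i j w, hcomp]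
    rfl
  have hF'app : ∀ (t : ℝ) (j : Fin d), F' t (EuclideanSpace.single j 1)
      = ∑ i, y i * ⟪gradient h (t • y), η i j (t • y)⟫ := by
    intro t j
    have : F' t (EuclideanSpace.single j 1)
        = fderiv ℝ (fderiv ℝ h) (t • y) (∑ i, y i • EuclideanSpace.single i 1)
            (EuclideanSpace.single j 1) := by rw [stmt2_sum_single]
    rw [this, map_sum, ContinuousLinearMap.sum_apply]
    refine Finset.sum_congr rfl fun i _ => ?_
    rw [map_smul, ContinuousLinearMap.smul_apply, key, smul_eq_mul]
  -- the Grönwall bound hypothesis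
  have hbound : ∀ t ∈ Set.Icc (0:ℝ) 1, ‖F' t‖ ≤ K * ‖F t‖ := by
    intro t ht
    have hmem : t • y ∈ Metric.closedBall (0 : EuclideanSpace ℝ (Fin d)) ‖y‖ := by
      rw [Metric.mem_closedBall, dist_zero_right, norm_smul]
      have h1 : ‖t‖ ≤ 1 := by rw [Real.norm_eq_abs, abs_le]; exact ⟨by linarith [ht.1], ht.2⟩
      calc ‖t‖ * ‖y‖ ≤ 1 * ‖y‖ := mul_le_mul_of_nonneg_right h1 (norm_nonneg _)
        _ = ‖y‖ := one_mul _
    calc ‖F' t‖ ≤ ∑ j, ‖F' t (EuclideanSpace.single j 1)‖ := stmt2_opnorm_le_sum d _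
      _ ≤ ∑ j, ∑ i, |y i| * C i j * ‖F t‖ := by
          refine Finset.sum_le_sum fun j _ => ?_
          rw [hF'app]
          calc ‖∑ i, y i * ⟪gradient h (t • y), η i j (t • y)⟫‖
              ≤ ∑ i, ‖y i * ⟪gradient h (t • y), η i j (t • y)⟫‖ := norm_sum_le _ _
            _ ≤ ∑ i, |y i| * C i j * ‖F t‖ := by
                refine Finset.sum_le_sum fun i _ => ?_
                rw [norm_mul]
                have h1 : ‖⟪gradient h (t • y), η i j (t • y)⟫‖ ≤ ‖F t‖ * C i j := by
                  calc ‖⟪gradient h (t • y), η i j (t • y)⟫‖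
                      ≤ ‖gradient h (t • y)‖ * ‖η i j (t • y)‖ := norm_inner_le_norm _ _
                    _ ≤ ‖F t‖ * C i j := by
                        rw [hgradnorm]
                        exact mul_le_mul_of_nonneg_left (hC i j _ hmem) (norm_nonneg _)
                calc ‖y i‖ * ‖⟪gradient h (t • y), η i j (t • y)⟫‖
                    ≤ ‖y i‖ * (‖F t‖ * C i j) :=
                      mul_le_mul_of_nonneg_left h1 (norm_nonneg _)
                  _ = |y i| * C i j * ‖F t‖ := by rw [Real.norm_eq_abs]; ring
      _ = K * ‖F t‖ := by rw [hKdef, Finset.sum_mul]; exact Finset.sum_congr rfl fun j _ =>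
            (Finset.sum_mul ..).symm
  -- F vanishes at 0
  have hF0 : ‖F 0‖ ≤ 0 := by
    have : F 0 = fderiv ℝ h 0 := by rw [hFdef]; simp
    rw [this, ← hgradnorm, hgrad0, norm_zero]
  -- continuity of F
  have hFcont : ContinuousOn F (Set.Icc (0:ℝ) 1) :=
    ((hdiff1.continuous).comp (continuous_id.smul continuous_const)).continuousOn
  -- Grönwall: F ≡ 0 on [0,1]
  have hFzero : ∀ t ∈ Set.Icc (0:ℝ) 1, F t = 0 := by
    intro t ht
    have := norm_le_gronwallBound_of_norm_deriv_right_le (δ := 0) (K := K) (ε := 0)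
      (a := 0) (b := 1) hFcont
      (fun x _ => (hFderiv x).hasDerivWithinAt) hF0
      (fun x hx => by
        rw [add_zero]; exact hbound x ⟨hx.1, le_of_lt hx.2⟩) t ht
    rw [gronwallBound_ε0_δ0] at this
    exact norm_le_zero_iff.mp this
  -- conclude: h is constant along t ↦ t • y
  have hconst : ∀ t ∈ Set.Icc (0:ℝ) 1, h (t • y) = h ((0:ℝ) • y) := by
    apply constant_of_has_deriv_right_zero
    · exact (hh.continuous.comp (continuous_id.smul continuous_const)).continuousOn
    · intro t ht
      have hd : HasDerivAt (fun s : ℝ => h (s • y)) (fderiv ℝ h (t • y) y) t :=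
        (hh.differentiable (by norm_num) (t • y)).hasFDerivAt.comp_hasDerivAt t (hz t)
      have h2 : fderiv ℝ h (t • y) y = 0 := by
        have : F t = 0 := hFzero t (Set.Ico_subset_Icc_self ht)
        rw [hFdef] at this
        simp only at this
        rw [this]; rfl
      rw [h2] at hd
      exact hd.hasDerivWithinAt
  have := hconst 1 (by norm_num)
  simpa [h0] using this
end

section
/- For i,j = 1,…,d let η_{i,j} : ℝ^d → ℝ^d be locally bounded. Consider the real vector space S₀ of all twice continuously differentiable functions f : ℝ^d → ℝ such that f(0) = 0 and ∂_i∂_j f(y) = ∇f(y)·η_{i,j}(y) for all i,j = 1,…,d and all y ∈ ℝ^d. Then the linear map Θ : S₀ → ℝ^d given by Θ(f) = ∇f(0) is injective; in particular, S₀ has dimension at most d. -/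
open scoped RealInnerProductSpace

section aux

variable {d : ℕ}

local notation "E" => EuclideanSpace ℝ (Fin d)

lemma coord_le_norm (w : E) (j : Fin d) : |w j| ≤ ‖w‖ := by
  have h := abs_real_inner_le_norm (EuclideanSpace.single j (1:ℝ)) w
  simpa [EuclideanSpace.inner_single_left, EuclideanSpace.norm_single] using h

lemma functional_norm_le (ℓ : E →L[ℝ] ℝ) :
    ‖ℓ‖ ≤ ∑ j, |ℓ (EuclideanSpace.single j 1)| := by
  refine ContinuousLinearMap.opNorm_le_bound _ (Finset.sum_nonneg fun _ _ => abs_nonneg _) ?_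
  intro w
  have hrepr : (∑ j, w j • EuclideanSpace.single j (1:ℝ)) = w := by
    simpa using (EuclideanSpace.basisFun (Fin d) ℝ).sum_repr w
  have hw : ℓ w = ∑ j, w j * ℓ (EuclideanSpace.single j 1) := by
    conv_lhs => rw [← hrepr]
    simp [map_sum]
  calc ‖ℓ w‖ = |∑ j, w j * ℓ (EuclideanSpace.single j 1)| := by rw [hw]; rfl
    _ ≤ ∑ j, |w j * ℓ (EuclideanSpace.single j 1)| := Finset.abs_sum_le_sum_abs _ _
    _ ≤ ∑ j, |ℓ (EuclideanSpace.single j 1)| * ‖w‖ := by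
        refine Finset.sum_le_sum fun j _ => ?_
        rw [abs_mul, mul_comm]
        exact mul_le_mul_of_nonneg_left (coord_le_norm w j) (abs_nonneg _)
    _ = (∑ j, |ℓ (EuclideanSpace.single j 1)|) * ‖w‖ := by rw [Finset.sum_mul]

lemma bilin_norm_le (A : E →L[ℝ] (E →L[ℝ] ℝ)) :
    ‖A‖ ≤ ∑ i, ∑ j, |A (EuclideanSpace.single i 1) (EuclideanSpace.single j 1)| := by
  refine ContinuousLinearMap.opNorm_le_bound _
    (Finset.sum_nonneg fun _ _ => Finset.sum_nonneg fun _ _ => abs_nonneg _) ?_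
  intro v
  calc ‖A v‖ ≤ ∑ j, |A v (EuclideanSpace.single j 1)| := functional_norm_le _
    _ ≤ ∑ j, ∑ i, |A (EuclideanSpace.single i 1) (EuclideanSpace.single j 1)| * ‖v‖ := by
        refine Finset.sum_le_sum fun j _ => ?_
        have hrepr : (∑ i, v i • EuclideanSpace.single i (1:ℝ)) = v := by
          simpa using (EuclideanSpace.basisFun (Fin d) ℝ).sum_repr v
        have hw : A v (EuclideanSpace.single j 1)
            = ∑ i, v i * A (EuclideanSpace.single i 1) (EuclideanSpace.single j 1) := by
          conv_lhs => rw [← hrepr]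
          simp [map_sum]
        calc |A v (EuclideanSpace.single j 1)|
            = |∑ i, v i * A (EuclideanSpace.single i 1) (EuclideanSpace.single j 1)| := by
              rw [hw]
          _ ≤ ∑ i, |v i * A (EuclideanSpace.single i 1) (EuclideanSpace.single j 1)| :=
              Finset.abs_sum_le_sum_abs _ _
          _ ≤ ∑ i, |A (EuclideanSpace.single i 1) (EuclideanSpace.single j 1)| * ‖v‖ := by
              refine Finset.sum_le_sum fun i _ => ?_
              rw [abs_mul, mul_comm]
              exact mul_le_mul_of_nonneg_left (coord_le_norm v i) (abs_nonneg _)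
    _ = (∑ i, ∑ j, |A (EuclideanSpace.single i 1) (EuclideanSpace.single j 1)|) * ‖v‖ := by
        rw [Finset.sum_comm, Finset.sum_mul]
        simp [Finset.sum_mul]

end aux

section key

variable {d : ℕ}
local notation "E" => EuclideanSpace ℝ (Fin d)

lemma key_vanish (η : Fin d → Fin d → E → E)
    (hη : ∀ i j, ∀ B : Set E, Bornology.IsBounded B → ∃ C : ℝ, ∀ y ∈ B, ‖η i j y‖ ≤ C)
    (f : E → ℝ) (hf : ContDiff ℝ 2 f) (hf0 : f 0 = 0)
    (hpde : ∀ i j, ∀ y : E,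
      fderiv ℝ (fun z => fderiv ℝ f z (EuclideanSpace.single j 1)) y (EuclideanSpace.single i 1)
        = ⟪gradient f y, η i j y⟫)
    (hg0 : fderiv ℝ f 0 = 0) : f = 0 := by
  set g : E → (E →L[ℝ] ℝ) := fderiv ℝ f with hg
  have hgC : ContDiff ℝ 1 g := hf.fderiv_right (by norm_num)
  have hgd : Differentiable ℝ g := hgC.differentiable one_ne_zero
  -- entries of the derivative of g
  have hentry : ∀ (y : E) i j,
      fderiv ℝ g y (EuclideanSpace.single i 1) (EuclideanSpace.single j 1)
        = ⟪gradient f y, η i j y⟫ := by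
    intro y i j
    have h1 : fderiv ℝ (fun z => g z (EuclideanSpace.single j 1)) y
        = (fderiv ℝ g y).flip (EuclideanSpace.single j 1) := by
      rw [fderiv_clm_apply (hgd y) (differentiableAt_const _)]
      simp
    have h2 := hpde i j y
    rw [← h2]
    have := congrArg (fun (T : E →L[ℝ] ℝ) => T (EuclideanSpace.single i 1)) h1
    simpa using this.symm
  -- norm of gradient equals norm of fderiv
  have hnormgrad : ∀ y : E, ‖gradient f y‖ = ‖g y‖ := fun y =>
    (InnerProductSpace.toDual ℝ E).symm.norm_map (g y)
  -- pointwise bound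
  have hbound : ∀ y : E, ‖fderiv ℝ g y‖ ≤ (∑ i, ∑ j, ‖η i j y‖) * ‖g y‖ := by
    intro y
    calc ‖fderiv ℝ g y‖
        ≤ ∑ i, ∑ j, |fderiv ℝ g y (EuclideanSpace.single i 1) (EuclideanSpace.single j 1)| :=
          bilin_norm_le _
      _ ≤ ∑ i, ∑ j, ‖η i j y‖ * ‖g y‖ := by
          refine Finset.sum_le_sum fun i _ => Finset.sum_le_sum fun j _ => ?_
          rw [hentry y i j]
          calc |⟪gradient f y, η i j y⟫| ≤ ‖gradient f y‖ * ‖η i j y‖ :=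
                abs_real_inner_le_norm _ _
            _ = ‖η i j y‖ * ‖g y‖ := by rw [hnormgrad, mul_comm]
      _ = (∑ i, ∑ j, ‖η i j y‖) * ‖g y‖ := by simp [Finset.sum_mul]
  -- g vanishes identically
  have hgzero : ∀ y₀ : E, g y₀ = 0 := by
    intro y₀
    obtain ⟨C, hC⟩ : ∃ C : Fin d → Fin d → ℝ, ∀ i j, ∀ y ∈ Metric.closedBall (0:E) ‖y₀‖,
        ‖η i j y‖ ≤ C i j := by
      choose C hC using fun i j => hη i j (Metric.closedBall (0:E) ‖y₀‖)
        Metric.isBounded_closedBall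
      exact ⟨C, hC⟩
    set K : ℝ := (∑ i, ∑ j, C i j) * ‖y₀‖ with hK
    set φ : ℝ → (E →L[ℝ] ℝ) := fun t => g (t • y₀) with hφ
    have hmem : ∀ t ∈ Set.Icc (0:ℝ) 1, (t • y₀) ∈ Metric.closedBall (0:E) ‖y₀‖ := by
      intro t ht
      simp only [Metric.mem_closedBall, dist_zero_right, norm_smul, Real.norm_eq_abs]
      nlinarith [abs_of_nonneg ht.1, ht.2, norm_nonneg y₀, abs_nonneg t]
    have hderiv : ∀ t : ℝ, HasDerivAt φ (fderiv ℝ g (t • y₀) y₀) t := by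
      intro t
      have h1 : HasDerivAt (fun t : ℝ => t • y₀) y₀ t := by
        simpa using (hasDerivAt_id t).smul_const y₀
      exact (hgd (t • y₀)).hasFDerivAt.comp_hasDerivAt t h1
    have hcont : ContinuousOn φ (Set.Icc 0 1) :=
      (hgd.continuous.comp (continuous_id.smul continuous_const)).continuousOn
    have key := norm_le_gronwallBound_of_norm_deriv_right_le (K := K) (δ := 0) (ε := 0)
      (a := 0) (b := 1) hcont
      (fun t _ => (hderiv t).hasDerivWithinAt)
      (by simp [hφ, hg0])
      ?_ 1 (by norm_num)
    · rw [gronwallBound_ε0_δ0] at key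
      have : φ 1 = 0 := by
        have := norm_le_zero_iff.mp key
        exact this
      simpa [hφ] using this
    · intro t ht
      have htIcc : t ∈ Set.Icc (0:ℝ) 1 := ⟨ht.1, le_of_lt ht.2⟩
      have hmem' := hmem t htIcc
      have h1 : ‖fderiv ℝ g (t • y₀) y₀‖ ≤ ‖fderiv ℝ g (t • y₀)‖ * ‖y₀‖ :=
        (fderiv ℝ g (t • y₀)).le_opNorm y₀
      have h2 := hbound (t • y₀)
      have h3 : (∑ i, ∑ j, ‖η i j (t • y₀)‖) ≤ ∑ i, ∑ j, C i j :=
        Finset.sum_le_sum fun i _ => Finset.sum_le_sum fun j _ => hC i j _ hmem'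
      have h4 : (0:ℝ) ≤ ∑ i, ∑ j, ‖η i j (t • y₀)‖ :=
        Finset.sum_nonneg fun _ _ => Finset.sum_nonneg fun _ _ => norm_nonneg _
      have h5 : ‖fderiv ℝ g (t • y₀)‖ * ‖y₀‖ ≤ (∑ i, ∑ j, C i j) * ‖g (t • y₀)‖ * ‖y₀‖ := by
        have := mul_le_mul_of_nonneg_right h2 (norm_nonneg y₀)
        refine le_trans this ?_
        have : (∑ i, ∑ j, ‖η i j (t • y₀)‖) * ‖g (t • y₀)‖ ≤
            (∑ i, ∑ j, C i j) * ‖g (t • y₀)‖ :=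
          mul_le_mul_of_nonneg_right h3 (norm_nonneg _)
        exact mul_le_mul_of_nonneg_right this (norm_nonneg _)
      calc ‖fderiv ℝ g (t • y₀) y₀‖ ≤ (∑ i, ∑ j, C i j) * ‖g (t • y₀)‖ * ‖y₀‖ :=
            le_trans h1 h5
        _ = K * ‖φ t‖ + 0 := by rw [hK, hφ]; ring
  -- conclude f = 0
  funext y
  have hconst := is_const_of_fderiv_eq_zero (𝕜 := ℝ) (hf.differentiable (by norm_num))
    (fun x => hgzero x) y 0
  simpa [hf0] using hconst

end key

section main
variable {d : ℕ}
local notation "E" => EuclideanSpace ℝ (Fin d)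

lemma grad_inner (f : E → ℝ) (y v : E) : ⟪gradient f y, v⟫ = fderiv ℝ f y v := by
  simp [gradient, InnerProductSpace.toDual_symm_apply]

def pdeSubmodule (η : Fin d → Fin d → E → E) : Submodule ℝ (E → ℝ) where
  carrier := {f | ContDiff ℝ 2 f ∧ f 0 = 0 ∧
      ∀ i j, ∀ y : E,
        fderiv ℝ (fun z => fderiv ℝ f z (EuclideanSpace.single j 1)) y
            (EuclideanSpace.single i 1)
          = ⟪gradient f y, η i j y⟫}
  zero_mem' := by
    refine ⟨contDiff_const, rfl, fun i j y => ?_⟩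
    have hz : fderiv ℝ (0 : E → ℝ) = 0 := by
      funext z
      exact fderiv_const_apply 0
    rw [grad_inner, hz]
    simp
  add_mem' := by
    rintro f h ⟨hfC, hf0, hfP⟩ ⟨hhC, hh0, hhP⟩
    have hfd : Differentiable ℝ f := hfC.differentiable (by norm_num)
    have hhd : Differentiable ℝ h := hhC.differentiable (by norm_num)
    refine ⟨hfC.add hhC, by simp [hf0, hh0], fun i j y => ?_⟩
    have hA : Differentiable ℝ (fun z => fderiv ℝ f z (EuclideanSpace.single j 1)) :=
      ((hfC.fderiv_right (by norm_num)).differentiable one_ne_zero).clm_apply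
        (differentiable_const _)
    have hB : Differentiable ℝ (fun z => fderiv ℝ h z (EuclideanSpace.single j 1)) :=
      ((hhC.fderiv_right (by norm_num)).differentiable one_ne_zero).clm_apply
        (differentiable_const _)
    have heq : (fun z => fderiv ℝ (f + h) z (EuclideanSpace.single j 1))
        = fun z => fderiv ℝ f z (EuclideanSpace.single j 1)
            + fderiv ℝ h z (EuclideanSpace.single j 1) := by
      funext z
      rw [show (f + h : E → ℝ) = fun y => f y + h y from rfl, fderiv_fun_add (hfd z) (hhd z)]
      rfl
    rw [heq, fderiv_fun_add (hA y) (hB y), ContinuousLinearMap.add_apply, hfP i j y, hhP i j y,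
      grad_inner, grad_inner, grad_inner,
      show (f + h : E → ℝ) = fun y => f y + h y from rfl, fderiv_fun_add (hfd y) (hhd y)]
    rfl
  smul_mem' := by
    rintro c f ⟨hfC, hf0, hfP⟩
    have hfd : Differentiable ℝ f := hfC.differentiable (by norm_num)
    refine ⟨hfC.const_smul c, by simp [hf0], fun i j y => ?_⟩
    have hA : Differentiable ℝ (fun z => fderiv ℝ f z (EuclideanSpace.single j 1)) :=
      ((hfC.fderiv_right (by norm_num)).differentiable one_ne_zero).clm_apply
        (differentiable_const _)
    have heq : (fun z => fderiv ℝ (c • f) z (EuclideanSpace.single j 1))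
        = fun z => c • (fderiv ℝ f z (EuclideanSpace.single j 1)) := by
      funext z
      rw [show (c • f : E → ℝ) = fun y => c • f y from rfl, fderiv_fun_const_smul (hfd z) c]
      rfl
    rw [heq, fderiv_fun_const_smul (hA y) c, ContinuousLinearMap.smul_apply, hfP i j y,
      grad_inner, grad_inner,
      show (c • f : E → ℝ) = fun y => c • f y from rfl, fderiv_fun_const_smul (hfd y) c]
    rfl

end main

/-- Let `S₀` be the set of `C²` functions `f : ℝ^d → ℝ` with `f 0 = 0` and
`∂_i ∂_j f(y) = ∇f(y) ⬝ η i j y` everywhere, where the `η i j` are locally bounded.  Then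
the linear map `Θ : S₀ → ℝ^d`, `f ↦ ∇f(0)`, is injective; in particular the span of `S₀`
has dimension at most `d`. -/
theorem stmt3 (d : ℕ)
    (η : Fin d → Fin d → EuclideanSpace ℝ (Fin d) → EuclideanSpace ℝ (Fin d))
    (hη_locbdd : ∀ i j, ∀ B : Set (EuclideanSpace ℝ (Fin d)), Bornology.IsBounded B →
      ∃ C : ℝ, ∀ y ∈ B, ‖η i j y‖ ≤ C)
    (S₀ : Set (EuclideanSpace ℝ (Fin d) → ℝ))
    (hS₀ : S₀ = {f | ContDiff ℝ 2 f ∧ f 0 = 0 ∧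
      ∀ i j, ∀ y : EuclideanSpace ℝ (Fin d),
        fderiv ℝ (fun z => fderiv ℝ f z (EuclideanSpace.single j 1)) y
            (EuclideanSpace.single i 1)
          = ⟪gradient f y, η i j y⟫}) :
    Set.InjOn (fun f => gradient f 0) S₀ ∧
      Module.rank ℝ ↥(Submodule.span ℝ S₀) ≤ d := by
  set M : Submodule ℝ (EuclideanSpace ℝ (Fin d) → ℝ) := pdeSubmodule η with hM
  have hS : S₀ = (M : Set (EuclideanSpace ℝ (Fin d) → ℝ)) := hS₀
  -- if f ∈ M and gradient f 0 = 0 then f = 0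
  have hker : ∀ f, f ∈ M → gradient f 0 = 0 → f = 0 := by
    rintro f ⟨hfC, hf0, hfP⟩ hgrad
    have hfd0 : fderiv ℝ f 0 = 0 := by
      have : (InnerProductSpace.toDual ℝ (EuclideanSpace ℝ (Fin d))).symm (fderiv ℝ f 0) = 0 :=
        hgrad
      simpa using this
    exact key_vanish η hη_locbdd f hfC hf0 hfP hfd0
  have hinj : Set.InjOn (fun f => gradient f 0) S₀ := by
    rw [hS]
    intro f hf h hh heq
    have hsub : f - h ∈ M := M.sub_mem hf hh
    have hgradsub : gradient (f - h) 0 = 0 := by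
      obtain ⟨hfC, -, -⟩ := hf
      obtain ⟨hhC, -, -⟩ := hh
      have : fderiv ℝ (f - h) 0 = fderiv ℝ f 0 - fderiv ℝ h 0 := by
        rw [show (f - h : EuclideanSpace ℝ (Fin d) → ℝ) = fun y => f y - h y from rfl,
          fderiv_fun_sub (hfC.differentiable (by norm_num) 0) (hhC.differentiable (by norm_num) 0)]
      have hgs : gradient (f - h) 0 = gradient f 0 - gradient h 0 := by
        simp [gradient, this, map_sub]
      rw [hgs, show gradient f 0 = gradient h 0 from heq, sub_self]
    have := hker (f - h) hsub hgradsub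
    exact sub_eq_zero.mp this
  refine ⟨hinj, ?_⟩
  have hspan : Submodule.span ℝ S₀ = M := by rw [hS]; exact Submodule.span_eq M
  rw [hspan]
  -- linear map M →ₗ ℝ^d
  let L : M →ₗ[ℝ] EuclideanSpace ℝ (Fin d) :=
    { toFun := fun f => gradient f.1 0
      map_add' := by
        rintro ⟨f, hf⟩ ⟨h, hh⟩
        obtain ⟨hfC, -, -⟩ := hf
        obtain ⟨hhC, -, -⟩ := hh
        have : fderiv ℝ (f + h) 0 = fderiv ℝ f 0 + fderiv ℝ h 0 := by
          rw [show (f + h : EuclideanSpace ℝ (Fin d) → ℝ) = fun y => f y + h y from rfl,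
            fderiv_fun_add (hfC.differentiable (by norm_num) 0) (hhC.differentiable (by norm_num) 0)]
        simp [gradient, this, map_add]
      map_smul' := by
        rintro c ⟨f, hf⟩
        obtain ⟨hfC, -, -⟩ := hf
        have : fderiv ℝ (c • f) 0 = c • fderiv ℝ f 0 := by
          rw [show (c • f : EuclideanSpace ℝ (Fin d) → ℝ) = fun y => c • f y from rfl,
            fderiv_fun_const_smul (hfC.differentiable (by norm_num) 0) c]
        simp [gradient, this, map_smul] }
  have hLinj : Function.Injective L := by
    rw [← LinearMap.ker_eq_bot, LinearMap.ker_eq_bot']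
    rintro ⟨f, hf⟩ hLf
    have : f = 0 := hker f hf (by simpa [L] using hLf)
    exact Subtype.ext this
  have h1 : Module.rank ℝ ↥M ≤ Module.rank ℝ (EuclideanSpace ℝ (Fin d)) :=
    LinearMap.rank_le_of_injective L hLinj
  have h2 : Module.rank ℝ (EuclideanSpace ℝ (Fin d)) = d := by
    rw [← Module.finrank_eq_rank]
    norm_cast
    exact finrank_euclideanSpace_fin
  rw [h2] at h1
  exact_mod_cast h1
end

section
/- Let N ⊆ ℝ^d be a Lebesgue-null set and, for i,j = 1,…,d, let η_{i,j} : ℝ^d \ N → ℝ^d be measurable and locally bounded with η_{i,j} = η_{j,i}. Let g : [0,∞) × ℝ^d → ℝ be of class C^{1,2} (continuously differentiable in the first variable x and twice continuously differentiable in the second variable y, with these partial derivatives jointly continuous) and suppose ∂_{y_i}∂_{y_j} g(x,y) = ∇_y g(x,y)·η_{i,j}(y) for all x ≥ 0, all y ∈ ℝ^d \ N, and all i,j = 1,…,d. Then there exists a twice continuously differentiable function A : ℝ^d → ℝ^d with A(0) = 0 such that g(x,y) = g(x,0) + ∇_y g(x,0)·A(y) for all x ≥ 0 and all y ∈ ℝ^d.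 -/
open MeasureTheory
open scoped RealInnerProductSpace

lemma aux_dense {s : Set ℝ} (h : volume (Set.Ioo (0:ℝ) 1 \ s) = 0) :
    Set.Icc (0:ℝ) 1 ⊆ closure (s ∩ Set.Ioo 0 1) := by
  intro u hu
  rw [mem_closure_iff]
  intro O hO huO
  have h1 : u ∈ closure (Set.Ioo (0:ℝ) 1) := by
    rw [closure_Ioo one_ne_zero.symm]; exact hu
  rw [mem_closure_iff] at h1
  obtain ⟨v, hvO, hvI⟩ := h1 O hO huO
  have hV : IsOpen (O ∩ Set.Ioo (0:ℝ) 1) := hO.inter isOpen_Ioo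
  have hpos : 0 < volume (O ∩ Set.Ioo (0:ℝ) 1) := hV.measure_pos _ ⟨v, hvO, hvI⟩
  by_contra hc
  rw [Set.not_nonempty_iff_eq_empty] at hc
  have : O ∩ Set.Ioo (0:ℝ) 1 ⊆ Set.Ioo (0:ℝ) 1 \ s := by
    intro z ⟨hzO, hzI⟩
    refine ⟨hzI, fun hzs => ?_⟩
    exact Set.eq_empty_iff_forall_notMem.mp hc z ⟨hzO, hzs, hzI⟩
  exact absurd (measure_mono_null this h) hpos.ne'

lemma aux_fubini {d : ℕ} {N' : Set (EuclideanSpace ℝ (Fin d))}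
    (hmeas : MeasurableSet N') (h0 : volume N' = 0) :
    ∀ᵐ y : EuclideanSpace ℝ (Fin d),
      ∀ᵐ t ∂(volume.restrict (Set.Ioo (0:ℝ) 1)), t • y ∉ N' := by
  set ν : Measure ℝ := volume.restrict (Set.Ioo (0:ℝ) 1) with hν
  have hsm : Measurable fun q : ℝ × EuclideanSpace ℝ (Fin d) => q.1 • q.2 :=
    (continuous_fst.smul continuous_snd).measurable
  have hT : MeasurableSet {q : ℝ × EuclideanSpace ℝ (Fin d) | q.1 • q.2 ∈ N'} :=
    hsm hmeas
  have hTnull : (ν.prod volume) {q : ℝ × EuclideanSpace ℝ (Fin d) | q.1 • q.2 ∈ N'} = 0 := by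
    rw [Measure.prod_apply hT]
    have hz : ∀ᵐ t ∂ν, (volume (Prod.mk t ⁻¹' {q : ℝ × EuclideanSpace ℝ (Fin d) | q.1 • q.2 ∈ N'}) = 0) := by
      filter_upwards [ae_restrict_mem measurableSet_Ioo] with t ht
      have htne : t ≠ 0 := ne_of_gt ht.1
      have h1 : (Prod.mk t ⁻¹' {q : ℝ × EuclideanSpace ℝ (Fin d) | q.1 • q.2 ∈ N'})
          = (fun y : EuclideanSpace ℝ (Fin d) => t • y) ⁻¹' N' := rfl
      rw [h1, Set.preimage_smul₀ htne N', Measure.addHaar_smul volume t⁻¹ N', h0, mul_zero]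
    calc ∫⁻ t, volume (Prod.mk t ⁻¹' _) ∂ν = ∫⁻ _, 0 ∂ν := lintegral_congr_ae hz
      _ = 0 := lintegral_zero
  have hS : (volume.prod ν) {p : EuclideanSpace ℝ (Fin d) × ℝ | p.2 • p.1 ∈ N'} = 0 := by
    have hswap := Measure.prod_swap (μ := ν) (ν := (volume : Measure (EuclideanSpace ℝ (Fin d))))
    have : (ν.prod volume) {q : ℝ × EuclideanSpace ℝ (Fin d) | q.1 • q.2 ∈ N'}
        = (Measure.map Prod.swap (volume.prod ν)) {q : ℝ × EuclideanSpace ℝ (Fin d) | q.1 • q.2 ∈ N'} := by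
      rw [Measure.prod_swap]
    rw [this, Measure.map_apply measurable_swap hT] at hTnull
    exact hTnull
  have := Measure.ae_ae_of_ae_prod (μ := (volume : Measure (EuclideanSpace ℝ (Fin d)))) (ν := ν)
    (p := fun p : EuclideanSpace ℝ (Fin d) × ℝ => p.2 • p.1 ∉ N') ?_
  · exact this
  · rw [ae_iff]
    simpa using hS

lemma aux_dual {d m : ℕ} {b : Fin m → EuclideanSpace ℝ (Fin d)}
    (hb : LinearIndependent ℝ b) :
    ∃ u : Fin m → EuclideanSpace ℝ (Fin d),
      ∀ k l, ⟪b l, u k⟫ = if k = l then 1 else 0 := by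
  set V := Submodule.span ℝ (Set.range b) with hV
  let B : Module.Basis (Fin m) ℝ V := Module.Basis.span hb
  let u' : Fin m → V := fun k =>
    (InnerProductSpace.toDual ℝ V).symm (LinearMap.toContinuousLinearMap (B.coord k))
  refine ⟨fun k => (u' k : EuclideanSpace ℝ (Fin d)), fun k l => ?_⟩
  have hbl : b l ∈ V := Submodule.subset_span ⟨l, rfl⟩
  have hBl : B l = ⟨b l, hbl⟩ := Module.Basis.span_apply hb l
  have h1 : ⟪b l, (u' k : EuclideanSpace ℝ (Fin d))⟫ = ⟪(u' k : EuclideanSpace ℝ (Fin d)), b l⟫ :=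
    real_inner_comm _ _
  have h2 : ⟪u' k, (⟨b l, hbl⟩ : V)⟫ = ⟪(u' k : EuclideanSpace ℝ (Fin d)), b l⟫ :=
    Submodule.coe_inner V (u' k) ⟨b l, hbl⟩
  rw [h1, ← h2, InnerProductSpace.toDual_symm_apply, ← hBl]
  simp [Module.Basis.coord_apply, Module.Basis.repr_self, Finsupp.single_apply, eq_comm]

lemma aux_norm_le {d : ℕ} (v : EuclideanSpace ℝ (Fin d)) :
    ‖v‖ ≤ ∑ j, |⟪v, EuclideanSpace.single j 1⟫| := by
  conv_lhs => rw [← OrthonormalBasis.sum_repr (EuclideanSpace.basisFun (Fin d) ℝ) v]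
  refine (norm_sum_le _ _).trans ?_
  refine Finset.sum_le_sum fun j _ => ?_
  rw [norm_smul, OrthonormalBasis.repr_apply_apply, EuclideanSpace.basisFun_apply,
    EuclideanSpace.norm_single]
  rw [real_inner_comm]
  simp [Real.norm_eq_abs]

lemma aux_key {d : ℕ}
    {N : Set (EuclideanSpace ℝ (Fin d))} (hN : volume N = 0)
    {η : Fin d → Fin d → EuclideanSpace ℝ (Fin d) → EuclideanSpace ℝ (Fin d)}
    (hη_locbdd : ∀ i j, ∀ B : Set (EuclideanSpace ℝ (Fin d)), Bornology.IsBounded B →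
      ∃ C : ℝ, ∀ y ∈ B \ N, ‖η i j y‖ ≤ C)
    {g : ℝ → EuclideanSpace ℝ (Fin d) → ℝ}
    (hg_y : ∀ x, ContDiff ℝ 2 (g x))
    (hpde : ∀ x ≥ (0:ℝ), ∀ y ∉ N, ∀ i j,
      fderiv ℝ (fun z => fderiv ℝ (g x) z (EuclideanSpace.single j 1)) y
          (EuclideanSpace.single i 1)
        = ⟪gradient (g x) y, η i j y⟫)
    {m : ℕ} (x : Fin m → ℝ) (hx : ∀ i, 0 ≤ x i) (c : Fin m → ℝ)
    (hsum : ∑ i, c i • gradient (g (x i)) 0 = 0) (y₀ : EuclideanSpace ℝ (Fin d)) :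
    ∑ i, c i * (g (x i) y₀ - g (x i) 0) = 0 := by
  classical
  obtain ⟨N', hNN', hN'meas, hN'0⟩ := exists_measurable_superset_of_null hN
  set F : EuclideanSpace ℝ (Fin d) → ℝ := fun y => ∑ i, c i * (g (x i) y - g (x i) 0) with hF
  have hFcont : Continuous F := by
    apply continuous_finset_sum
    intro i _
    exact continuous_const.mul ((hg_y (x i)).continuous.sub continuous_const)
  set φ : StrongDual ℝ (EuclideanSpace ℝ (Fin d)) ≃ₗᵢ[ℝ] EuclideanSpace ℝ (Fin d) :=
    (InnerProductSpace.toDual ℝ (EuclideanSpace ℝ (Fin d))).symm with hφ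
  have hD1 : ∀ i, ContDiff ℝ 1 (fderiv ℝ (g (x i))) :=
    fun i => (hg_y (x i)).fderiv_right (by norm_num)
  suffices hae : F =ᶠ[ae volume] (fun _ => 0) by
    have := (Continuous.ae_eq_iff_eq volume hFcont continuous_const).mp hae
    have h2 := congrFun this y₀
    simpa [hF] using h2
  have hfub := aux_fubini hN'meas hN'0
  filter_upwards [hfub] with y hy
  -- setup along the ray t ↦ t • y
  have hray : ∀ t : ℝ, HasDerivAt (fun s : ℝ => s • y) y t := fun t => by
    simpa using (hasDerivAt_id t).smul_const y
  set w : ℝ → EuclideanSpace ℝ (Fin d) :=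
    fun t => ∑ i, c i • φ (fderiv ℝ (g (x i)) (t • y)) with hw
  set w' : ℝ → EuclideanSpace ℝ (Fin d) :=
    fun t => ∑ i, c i • φ (fderiv ℝ (fderiv ℝ (g (x i))) (t • y) y) with hw'
  have hwderiv : ∀ t, HasDerivAt w (w' t) t := by
    intro t
    apply HasDerivAt.fun_sum
    intro i _
    have h1 : HasDerivAt (fun s : ℝ => fderiv ℝ (g (x i)) (s • y))
        (fderiv ℝ (fderiv ℝ (g (x i))) (t • y) y) t :=
      (((hD1 i).differentiable one_ne_zero (t • y)).hasFDerivAt).comp_hasDerivAt t (hray t)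
    have h2 : HasDerivAt (fun s : ℝ => φ (fderiv ℝ (g (x i)) (s • y)))
        (φ (fderiv ℝ (fderiv ℝ (g (x i))) (t • y) y)) t :=
      (φ.toContinuousLinearMap.hasFDerivAt).comp_hasDerivAt t h1
    exact h2.const_smul (c i)
  have hwcont : Continuous w := by
    apply continuous_finset_sum
    intro i _
    exact ((φ.continuous.comp ((hD1 i).continuous.comp
      (continuous_id.smul continuous_const)))).fun_const_smul _
  have hw'cont : Continuous w' := by
    apply continuous_finset_sum
    intro i _
    refine Continuous.fun_const_smul (φ.continuous.comp ?_) _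
    exact Continuous.clm_apply
      (((hD1 i).continuous_fderiv one_ne_zero).comp (continuous_id.smul continuous_const))
      continuous_const
  -- constants
  have hB : Bornology.IsBounded (Metric.closedBall (0:EuclideanSpace ℝ (Fin d)) ‖y‖) :=
    Metric.isBounded_closedBall
  choose Cf hCf using fun k j => hη_locbdd k j _ hB
  set C₀ : ℝ := ∑ k : Fin d, ∑ j : Fin d, max (Cf k j) 0 with hC₀def
  have hC₀ : ∀ k j z, z ∈ Metric.closedBall (0:EuclideanSpace ℝ (Fin d)) ‖y‖ → z ∉ N →
      ‖η k j z‖ ≤ C₀ := by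
    intro k j z hz hzN
    have step1 : Cf k j ≤ max (Cf k j) 0 := le_max_left _ _
    have step2 : max (Cf k j) 0 ≤ ∑ j' : Fin d, max (Cf k j') 0 :=
      Finset.single_le_sum (f := fun j' => max (Cf k j') 0)
        (fun j' _ => le_max_right _ _) (Finset.mem_univ j)
    have step3 : (∑ j' : Fin d, max (Cf k j') 0) ≤ C₀ :=
      Finset.single_le_sum (f := fun k' => ∑ j' : Fin d, max (Cf k' j') 0)
        (fun k' _ => Finset.sum_nonneg fun j' _ => le_max_right _ _) (Finset.mem_univ k)
    exact (hCf k j z ⟨hz, hzN⟩).trans (step1.trans (step2.trans step3))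
  set K : ℝ := (d:ℝ) * ((d:ℝ) * (‖y‖ * C₀)) with hK
  -- bound at good points
  have hgood : ∀ t ∈ Set.Ioo (0:ℝ) 1, t • y ∉ N' → ‖w' t‖ ≤ K * ‖w t‖ := by
    intro t ht hzN'
    set z := t • y with hzdef
    have hzN : z ∉ N := fun h => hzN' (hNN' h)
    have hzball : z ∈ Metric.closedBall (0:EuclideanSpace ℝ (Fin d)) ‖y‖ := by
      rw [Metric.mem_closedBall, dist_zero_right, hzdef, norm_smul]
      calc ‖t‖ * ‖y‖ ≤ 1 * ‖y‖ := by
            refine mul_le_mul_of_nonneg_right ?_ (norm_nonneg y)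
            rw [Real.norm_eq_abs, abs_of_pos ht.1]; exact le_of_lt ht.2
        _ = ‖y‖ := one_mul _
    have hterm : ∀ i j, fderiv ℝ (fderiv ℝ (g (x i))) z y (EuclideanSpace.single j 1)
        = ⟪gradient (g (x i)) z, ∑ k, y k • η k j z⟫ := by
      intro i j
      have hy_expand : (y : EuclideanSpace ℝ (Fin d)) = ∑ k, y k • EuclideanSpace.single k 1 := by
        conv_lhs => rw [← OrthonormalBasis.sum_repr (EuclideanSpace.basisFun (Fin d) ℝ) y]
        simp [EuclideanSpace.basisFun_apply, EuclideanSpace.basisFun_repr]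
      calc fderiv ℝ (fderiv ℝ (g (x i))) z y (EuclideanSpace.single j 1)
          = ∑ k, y k * (fderiv ℝ (fderiv ℝ (g (x i))) z (EuclideanSpace.single k 1)
              (EuclideanSpace.single j 1)) := by
            conv_lhs => rw [hy_expand, map_sum]
            simp only [_root_.map_smul, ContinuousLinearMap.coe_sum', Finset.sum_apply,
              ContinuousLinearMap.coe_smul', Pi.smul_apply, smul_eq_mul]
        _ = ∑ k, y k * ⟪gradient (g (x i)) z, η k j z⟫ := by
            refine Finset.sum_congr rfl fun k _ => ?_
            congr 1
            have hclm : fderiv ℝ (fun z' => fderiv ℝ (g (x i)) z' (EuclideanSpace.single j 1)) z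
                = (fderiv ℝ (fderiv ℝ (g (x i))) z).flip (EuclideanSpace.single j 1) := by
              rw [fderiv_clm_apply ((hD1 i).differentiable one_ne_zero z) (differentiableAt_const _)]
              simp
            have hp := hpde (x i) (hx i) z hzN k j
            rw [hclm] at hp
            simpa [ContinuousLinearMap.flip_apply] using hp
        _ = ⟪gradient (g (x i)) z, ∑ k, y k • η k j z⟫ := by
            rw [inner_sum]
            refine (Finset.sum_congr rfl fun k _ => ?_).symm
            rw [real_inner_smul_right]
    have hcomp : ∀ j, ⟪w' t, EuclideanSpace.single j 1⟫ = ⟪w t, ∑ k, y k • η k j z⟫ := by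
      intro j
      rw [hw', hw]
      rw [sum_inner, sum_inner]
      refine Finset.sum_congr rfl fun i _ => ?_
      rw [real_inner_smul_left, real_inner_smul_left]
      congr 1
      rw [hφ, InnerProductSpace.toDual_symm_apply]
      exact hterm i j
    have hnorm_comp : ∀ j, |⟪w' t, EuclideanSpace.single j 1⟫|
        ≤ ‖w t‖ * ((d:ℝ) * (‖y‖ * C₀)) := by
      intro j
      rw [hcomp j]
      refine (abs_real_inner_le_norm _ _).trans ?_
      refine mul_le_mul_of_nonneg_left ?_ (norm_nonneg _)
      calc ‖∑ k, y k • η k j z‖ ≤ ∑ k, ‖y k • η k j z‖ := norm_sum_le _ _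
        _ ≤ ∑ _k : Fin d, ‖y‖ * C₀ := by
            refine Finset.sum_le_sum fun k _ => ?_
            rw [norm_smul]
            have h1 : ‖y k‖ ≤ ‖y‖ := by
              have h2 := abs_real_inner_le_norm (EuclideanSpace.single k (1:ℝ)) y
              rw [EuclideanSpace.inner_single_left] at h2
              simpa [EuclideanSpace.norm_single] using h2
            have h0 : (0:ℝ) ≤ C₀ := (norm_nonneg _).trans (hC₀ k j z hzball hzN)
            exact mul_le_mul h1 (hC₀ k j z hzball hzN) (norm_nonneg _) (norm_nonneg _)
        _ = (d:ℝ) * (‖y‖ * C₀) := by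
            rw [Finset.sum_const, Finset.card_univ, Fintype.card_fin, nsmul_eq_mul]
    calc ‖w' t‖ ≤ ∑ j, |⟪w' t, EuclideanSpace.single j 1⟫| := aux_norm_le _
      _ ≤ ∑ _j : Fin d, ‖w t‖ * ((d:ℝ) * (‖y‖ * C₀)) :=
          Finset.sum_le_sum fun j _ => hnorm_comp j
      _ = K * ‖w t‖ := by
          rw [Finset.sum_const, Finset.card_univ, Fintype.card_fin, nsmul_eq_mul, hK]; ring
  -- extend the bound to [0,1) by continuity and density
  have hnullset : volume (Set.Ioo (0:ℝ) 1 \ {t : ℝ | t • y ∉ N'}) = 0 := by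
    have h2 := hy
    rw [ae_iff, Measure.restrict_apply' measurableSet_Ioo] at h2
    refine measure_mono_null ?_ h2
    rintro t ⟨ht1, ht2⟩
    exact ⟨by simpa using ht2, ht1⟩
  have hbound : ∀ t ∈ Set.Ico (0:ℝ) 1, ‖w' t‖ ≤ K * ‖w t‖ + 0 := by
    intro t ht
    have hsub : Set.Icc (0:ℝ) 1 ⊆ closure ({t : ℝ | t • y ∉ N'} ∩ Set.Ioo 0 1) :=
      aux_dense hnullset
    have hclosed : IsClosed {t : ℝ | ‖w' t‖ ≤ K * ‖w t‖} :=
      isClosed_le hw'cont.norm (continuous_const.mul hwcont.norm)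
    have hsubset : ({t : ℝ | t • y ∉ N'} ∩ Set.Ioo 0 1) ⊆ {t : ℝ | ‖w' t‖ ≤ K * ‖w t‖} := by
      rintro t ⟨h1, h2⟩
      exact hgood t h2 h1
    have h3 := hclosed.closure_subset_iff.mpr hsubset (hsub (Set.mem_Icc_of_Ico ht))
    simpa using h3
  have hw0 : w 0 = 0 := by
    show (∑ i, c i • φ (fderiv ℝ (g (x i)) ((0:ℝ) • y))) = 0
    rw [zero_smul]
    exact hsum
  have hwzero : ∀ t ∈ Set.Icc (0:ℝ) 1, w t = 0 := by
    intro t ht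
    have h3 := norm_le_gronwallBound_of_norm_deriv_right_le (δ := 0) (K := K) (ε := 0)
      hwcont.continuousOn (fun s _ => (hwderiv s).hasDerivWithinAt)
      (by rw [hw0]; simp) hbound t ht
    rw [gronwallBound_ε0] at h3
    exact norm_le_zero_iff.mp (by simpa using h3)
  -- integrate along the ray
  set h : ℝ → ℝ := fun t => ∑ i, c i * g (x i) (t • y) with hh
  have hhderiv : ∀ t, HasDerivAt h (⟪w t, y⟫) t := by
    intro t
    have h4 : HasDerivAt h (∑ i, c i * (fderiv ℝ (g (x i)) (t • y) y)) t := by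
      apply HasDerivAt.fun_sum
      intro i _
      have h1 : HasDerivAt (fun s : ℝ => g (x i) (s • y)) (fderiv ℝ (g (x i)) (t • y) y) t :=
        (((hg_y (x i)).differentiable (by norm_num) (t • y)).hasFDerivAt).comp_hasDerivAt
          t (hray t)
      exact h1.const_mul (c i)
    convert h4 using 1
    rw [hw, sum_inner]
    refine Finset.sum_congr rfl fun i _ => ?_
    rw [real_inner_smul_left, hφ, InnerProductSpace.toDual_symm_apply]
  have hhcont : Continuous h := by
    apply continuous_finset_sum
    intro i _
    exact continuous_const.mul ((hg_y (x i)).continuous.comp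
      (continuous_id.smul continuous_const))
  have heq : h 1 = h 0 := by
    have key := eq_of_has_deriv_right_eq (f' := fun _ => (0:ℝ)) (a := 0) (b := 1)
      (f := h) (g := fun _ => h 0)
      (fun s hs => by
        have h0 : (⟪w s, y⟫) = 0 := by
          rw [hwzero s (Set.mem_Icc_of_Ico hs)]
          exact inner_zero_left y
        have := (hhderiv s).hasDerivWithinAt (s := Set.Ici s)
        rwa [h0] at this)
      (fun s hs => hasDerivWithinAt_const s _ (h 0))
      hhcont.continuousOn continuousOn_const rfl
    exact key 1 (by norm_num)
  show F y = 0
  have hFy : F y = h 1 - h 0 := by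
    simp only [hF, hh, one_smul, zero_smul, mul_sub, Finset.sum_sub_distrib]
  rw [hFy, heq, sub_self]

lemma aux_extract {V : Type*} [AddCommGroup V] [Module ℝ V] [Module.Finite ℝ V] (S : Set V) :
    ∃ (m : ℕ) (b : Fin m → V), LinearIndependent ℝ b ∧ (∀ k, b k ∈ S) ∧
      Submodule.span ℝ (Set.range b) = Submodule.span ℝ S := by
  obtain ⟨sb, hsbS, hspan, hli⟩ := exists_linearIndependent ℝ S
  have hfin : sb.Finite := hli.setFinite
  obtain ⟨m, f, hf⟩ := hfin.fin_embedding
  refine ⟨m, f, ?_, ?_, ?_⟩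
  · rw [← linearIndepOn_id_range_iff f.injective, hf]
    exact hli
  · intro k
    exact hsbS (hf ▸ Set.mem_range_self k)
  · rw [hf, hspan]


/-- Let `N ⊆ ℝ^d` be Lebesgue-null and `η i j : ℝ^d \ N → ℝ^d` measurable,
locally bounded and symmetric.  Let `g : [0,∞) × ℝ^d → ℝ` be `C^{1,2}` (i.e. `C¹` in `x`,
`C²` in `y`, with jointly continuous partial derivatives) with
`∂_{y_i}∂_{y_j} g(x,y) = ∇_y g(x,y) ⬝ η i j y` for all `x ≥ 0`, `y ∉ N`.  Then there is a
`C²` function `A : ℝ^d → ℝ^d` with `A 0 = 0` such that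
`g(x,y) = g(x,0) + ∇_y g(x,0) ⬝ A(y)` for all `x ≥ 0`, `y ∈ ℝ^d`. -/
theorem stmt4 (d : ℕ)
    (N : Set (EuclideanSpace ℝ (Fin d))) (hN : volume N = 0)
    (η : Fin d → Fin d → EuclideanSpace ℝ (Fin d) → EuclideanSpace ℝ (Fin d))
    (hη_meas : ∀ i j, Measurable (η i j))
    (hη_locbdd : ∀ i j, ∀ B : Set (EuclideanSpace ℝ (Fin d)), Bornology.IsBounded B →
      ∃ C : ℝ, ∀ y ∈ B \ N, ‖η i j y‖ ≤ C)
    (hη_symm : ∀ i j, ∀ y ∉ N, η i j y = η j i y)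
    (g : ℝ → EuclideanSpace ℝ (Fin d) → ℝ)
    -- g is C^{1,2}: C¹ in x, C² in y, with jointly continuous partial derivatives
    (hg_x : ∀ y, ContDiffOn ℝ 1 (fun x => g x y) (Set.Ici 0))
    (hg_y : ∀ x, ContDiff ℝ 2 (g x))
    (hg_joint_x : ContinuousOn
      (fun p : ℝ × EuclideanSpace ℝ (Fin d) =>
        derivWithin (fun x => g x p.2) (Set.Ici 0) p.1)
      (Set.Ici 0 ×ˢ Set.univ))
    (hg_joint_y : ContinuousOn
      (fun p : ℝ × EuclideanSpace ℝ (Fin d) => gradient (g p.1) p.2)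
      (Set.Ici 0 ×ˢ Set.univ))
    (hg_joint_yy : ∀ i j, ContinuousOn
      (fun p : ℝ × EuclideanSpace ℝ (Fin d) =>
        fderiv ℝ (fun z => fderiv ℝ (g p.1) z (EuclideanSpace.single j 1)) p.2
          (EuclideanSpace.single i 1))
      (Set.Ici 0 ×ˢ Set.univ))
    (hpde : ∀ x ≥ (0:ℝ), ∀ y ∉ N, ∀ i j,
      fderiv ℝ (fun z => fderiv ℝ (g x) z (EuclideanSpace.single j 1)) y
          (EuclideanSpace.single i 1)
        = ⟪gradient (g x) y, η i j y⟫) :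
    ∃ A : EuclideanSpace ℝ (Fin d) → EuclideanSpace ℝ (Fin d),
      ContDiff ℝ 2 A ∧ A 0 = 0 ∧
      ∀ x ≥ (0:ℝ), ∀ y, g x y = g x 0 + ⟪gradient (g x) 0, A y⟫ := by
  classical
  obtain ⟨m, b, hbli, hbS, hspan⟩ :=
    aux_extract {v : EuclideanSpace ℝ (Fin d) | ∃ x : ℝ, 0 ≤ x ∧ gradient (g x) 0 = v}
  have hchoice : ∀ k, ∃ x : ℝ, 0 ≤ x ∧ gradient (g x) 0 = b k := fun k => hbS k
  choose xs hxs hgxs using hchoice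
  obtain ⟨u, hu⟩ := aux_dual hbli
  refine ⟨fun y => ∑ k, (g (xs k) y - g (xs k) 0) • u k, ?_, ?_, ?_⟩
  · apply ContDiff.sum
    intro k _
    exact (((hg_y (xs k)).sub contDiff_const).smul contDiff_const)
  · simp
  · intro x hx y
    have hmem : gradient (g x) 0 ∈ Submodule.span ℝ (Set.range b) := by
      rw [hspan]
      exact Submodule.subset_span ⟨x, hx, rfl⟩
    rw [Submodule.mem_span_range_iff_exists_fun] at hmem
    obtain ⟨c, hc⟩ := hmem
    have hzero : ∑ i : Fin (m+1),
        (Fin.cons 1 (fun k => -c k) : Fin (m+1) → ℝ) i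
          • gradient (g ((Fin.cons x xs : Fin (m+1) → ℝ) i)) 0 = 0 := by
      rw [Fin.sum_univ_succ]
      simp only [Fin.cons_succ, Fin.cons_zero, one_smul, neg_smul, Finset.sum_neg_distrib]
      rw [Finset.sum_congr rfl fun k _ => by rw [hgxs k], hc]
      abel
    have hkey := aux_key hN hη_locbdd hg_y hpde (Fin.cons x xs) (fun i => Fin.cases hx hxs i)
      (Fin.cons 1 fun k => -c k) hzero y
    rw [Fin.sum_univ_succ] at hkey
    simp only [Fin.cons_succ, Fin.cons_zero, one_mul, neg_mul, Finset.sum_neg_distrib] at hkey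
    have hgy : g x y - g x 0 = ∑ k, c k * (g (xs k) y - g (xs k) 0) := by
      have := hkey
      linarith [hkey]
    have hinner : ⟪gradient (g x) 0, ∑ k, (g (xs k) y - g (xs k) 0) • u k⟫
        = ∑ k, c k * (g (xs k) y - g (xs k) 0) := by
      rw [inner_sum]
      refine Finset.sum_congr rfl fun k _ => ?_
      rw [real_inner_smul_right, ← hc, sum_inner]
      have hterm : ∀ l ∈ Finset.univ, ⟪c l • b l, u k⟫ = if l = k then c l else 0 := by
        intro l _
        rw [real_inner_smul_left, hu k l]
        by_cases h : k = l <;> simp [h, eq_comm]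
      rw [Finset.sum_congr rfl hterm, Finset.sum_ite_eq' Finset.univ k fun l => c l]
      simp [mul_comm]
    rw [hinner, ← hgy]
    ring
end

section
/- A function f : ℝ → ℝ is quasi-exponential if and only if there exist n ∈ ℕ, a matrix A ∈ ℝ^{n×n}, and vectors b, c ∈ ℝ^n such that f(x) = c·(e^{Ax} b) for all x ∈ ℝ, where e^{Ax} denotes the matrix exponential of Ax and · the standard scalar product on ℝ^n. -/
open scoped Matrix

/-- A function `f : ℝ → ℝ` is quasi-exponential if it is a finite sum
`Σ_j e^{α_j x}(p_j(x)cos(ω_j x) + q_j(x)sin(ω_j x))` with `α_j, ω_j ∈ ℝ` and real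
polynomials `p_j, q_j`. -/
def IsQuasiExponential (f : ℝ → ℝ) : Prop :=
  ∃ (n : ℕ) (α ω : Fin n → ℝ) (p q : Fin n → Polynomial ℝ),
    ∀ x : ℝ, f x = ∑ j, Real.exp (α j * x) *
      ((p j).eval x * Real.cos (ω j * x) + (q j).eval x * Real.sin (ω j * x))

open NormedSpace

noncomputable section QEAux

def IsCQE (g : ℝ → ℂ) : Prop :=
  ∃ (n : ℕ) (l : Fin n → ℂ) (P : Fin n → Polynomial ℂ),
    ∀ x : ℝ, g x = ∑ j, Complex.exp (l j * x) * (P j).eval (x : ℂ)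

lemma IsCQE.congr {g h : ℝ → ℂ} (hg : IsCQE g) (e : ∀ x, g x = h x) : IsCQE h := by
  obtain ⟨n, l, P, hP⟩ := hg
  exact ⟨n, l, P, fun x => (e x).symm.trans (hP x)⟩

lemma IsCQE.zero : IsCQE (fun _ => 0) :=
  ⟨0, ![], ![], fun x => by simp⟩

lemma IsCQE.add {g h : ℝ → ℂ} (hg : IsCQE g) (hh : IsCQE h) : IsCQE (fun x => g x + h x) := by
  obtain ⟨n, l, P, hP⟩ := hg
  obtain ⟨m, l', P', hP'⟩ := hh
  refine ⟨n + m, Fin.append l l', Fin.append P P', fun x => ?_⟩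
  show g x + h x = _
  rw [hP x, hP' x, Fin.sum_univ_add]
  simp [Fin.append_left, Fin.append_right]

lemma cqe_gen_eig {n : ℕ} (B : Matrix (Fin n) (Fin n) ℂ) (c : Fin n → ℂ) (μ : ℂ) (m : ℕ)
    (v : Fin n → ℂ) (hv : ((B - μ • 1) ^ m) *ᵥ v = 0) :
    IsCQE fun x : ℝ => c ⬝ᵥ (exp (x • B) *ᵥ v) := by
  letI : SeminormedRing (Matrix (Fin n) (Fin n) ℂ) := Matrix.linftyOpSemiNormedRing
  letI : NormedRing (Matrix (Fin n) (Fin n) ℂ) := Matrix.linftyOpNormedRing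
  letI : NormedAlgebra ℝ (Matrix (Fin n) (Fin n) ℂ) := Matrix.linftyOpNormedAlgebra
  letI : NormedAlgebra ℂ (Matrix (Fin n) (Fin n) ℂ) := Matrix.linftyOpNormedAlgebra
  set N : Matrix (Fin n) (Fin n) ℂ := B - μ • 1 with hN
  let L : Matrix (Fin n) (Fin n) ℂ →ₗ[ℂ] ℂ :=
    { toFun := fun M => c ⬝ᵥ (M *ᵥ v)
      map_add' := fun M M' => by simp [Matrix.add_mulVec, dotProduct_add]
      map_smul' := fun r M => by simp [Matrix.smul_mulVec, dotProduct_smul] }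
  have hLcont : Continuous L := L.continuous_of_finiteDimensional
  have hLN : ∀ k, m ≤ k → L (N ^ k) = 0 := by
    intro k hk
    have h1 : N ^ k = N ^ (k - m) * N ^ m := by rw [← pow_add]; congr 1; omega
    show c ⬝ᵥ (N ^ k *ᵥ v) = 0
    rw [h1, ← Matrix.mulVec_mulVec, hv, Matrix.mulVec_zero, dotProduct_zero]
  set P : Polynomial ℂ := ∑ k ∈ Finset.range m,
      Polynomial.C ((k.factorial : ℝ)⁻¹ • L (N ^ k)) * Polynomial.X ^ k with hPdef
  refine ⟨1, ![μ], ![P], fun x => ?_⟩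
  have hsplit : exp (x • B) = Complex.exp (μ * x) • exp (x • N) := by
    have hB : x • B = ((x : ℂ) * μ) • (1 : Matrix (Fin n) (Fin n) ℂ) + x • N := by
      have h1 : ((x : ℂ) * μ) • (1 : Matrix (Fin n) (Fin n) ℂ) = x • (μ • 1) := by
        rw [mul_smul, ← Complex.coe_algebraMap, algebraMap_smul]
      rw [hN, h1, smul_sub, add_sub_cancel]
    have hcomm : Commute (((x : ℂ) * μ) • (1 : Matrix (Fin n) (Fin n) ℂ)) (x • N) :=
      ((Commute.one_left N).smul_right x).smul_left _
    rw [hB, Matrix.exp_add_of_commute _ _ hcomm]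
    congr 1
    have h2 : ((x : ℂ) * μ) • (1 : Matrix (Fin n) (Fin n) ℂ) =
        algebraMap ℂ (Matrix (Fin n) (Fin n) ℂ) ((x : ℂ) * μ) := by
      rw [Algebra.algebraMap_eq_smul_one]
    erw [h2, ← map_exp (algebraMap ℂ (Matrix (Fin n) (Fin n) ℂ)) (continuous_algebraMap _ _),
      Algebra.algebraMap_eq_smul_one]
    rw [← Complex.exp_eq_exp_ℂ, mul_comm, smul_mul_assoc, one_mul]

  -- now the tsum part
  have hexpN : L (exp (x • N)) = ∑ k ∈ Finset.range m, ((k.factorial : ℝ)⁻¹ • (x ^ k • L (N ^ k))) := by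
    rw [exp_eq_tsum ℝ]
    have hsummable : Summable fun k : ℕ => ((k.factorial : ℝ))⁻¹ • (x • N) ^ k :=
      expSeries_summable' (𝕂 := ℝ) (x • N)
    rw [← (hsummable.hasSum.map L hLcont).tsum_eq]
    refine tsum_eq_sum ?_ |>.trans (Finset.sum_congr rfl ?_)
    · intro k hk
      show L (((k.factorial : ℝ))⁻¹ • (x • N) ^ k) = 0
      rw [smul_pow, L.map_smul_of_tower, L.map_smul_of_tower, hLN k (by simpa using hk),
        smul_zero, smul_zero]
    · intro k _
      show L (((k.factorial : ℝ))⁻¹ • (x • N) ^ k) = _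
      rw [smul_pow, L.map_smul_of_tower, L.map_smul_of_tower]
  have hPeval : P.eval (x : ℂ) = ∑ k ∈ Finset.range m,
      ((k.factorial : ℝ)⁻¹ • L (N ^ k)) * (x : ℂ) ^ k := by
    rw [hPdef]
    simp [Polynomial.eval_finset_sum]
  show c ⬝ᵥ (exp (x • B) *ᵥ v) = _
  rw [hsplit, Matrix.smul_mulVec, dotProduct_smul, smul_eq_mul]
  have : c ⬝ᵥ (exp (x • N) *ᵥ v) = L (exp (x • N)) := rfl
  rw [this, hexpN, Fin.sum_univ_one]
  simp only [Matrix.cons_val_zero, hPeval, Finset.mul_sum]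
  refine Finset.sum_congr rfl fun k _ => ?_
  simp only [smul_eq_mul, Complex.real_smul]
  push_cast
  ring


lemma cqe_matrix {n : ℕ} (B : Matrix (Fin n) (Fin n) ℂ) (c b : Fin n → ℂ) :
    IsCQE fun x : ℝ => c ⬝ᵥ (exp (x • B) *ᵥ b) := by
  set T : Module.End ℂ (Fin n → ℂ) := Matrix.toLinAlgEquiv' B with hT
  have htop : b ∈ ⨆ μ : ℂ, T.maxGenEigenspace μ := by
    rw [Module.End.iSup_maxGenEigenspace_eq_top]; trivial
  refine Submodule.iSup_induction (motive := fun v => IsCQE fun x : ℝ => c ⬝ᵥ (exp (x • B) *ᵥ v))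
    _ htop ?_ ?_ ?_
  · intro μ v hv
    rw [Module.End.mem_maxGenEigenspace] at hv
    obtain ⟨k, hk⟩ := hv
    refine cqe_gen_eig B c μ k v ?_
    have : ((T - μ • 1) ^ k) = Matrix.toLinAlgEquiv' ((B - μ • 1) ^ k) := by
      rw [map_pow, map_sub, map_smul, map_one]
    rwa [this, Matrix.toLinAlgEquiv'_apply] at hk
  · exact IsCQE.zero.congr (by simp)
  · intro v w hv hw
    exact (hv.add hw).congr (by simp [Matrix.mulVec_add, dotProduct_add])

lemma poly_decomp (P : Polynomial ℂ) : ∃ p q : Polynomial ℝ,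
    ∀ x : ℝ, P.eval (x : ℂ) = Complex.ofReal (p.eval x) + Complex.ofReal (q.eval x) * Complex.I := by
  induction P using Polynomial.induction_on with
  | C a =>
    refine ⟨Polynomial.C a.re, Polynomial.C a.im, fun x => by
      simp only [Polynomial.eval_C]
      exact (Complex.re_add_im a).symm⟩
  | add f g hf hg =>
    obtain ⟨p, q, hp⟩ := hf
    obtain ⟨p', q', hq⟩ := hg
    exact ⟨p + p', q + q', fun x => by simp [hp, hq]; ring⟩
  | monomial k a ih =>
    obtain ⟨p, q, hp⟩ := ih
    refine ⟨p * Polynomial.X, q * Polynomial.X, fun x => ?_⟩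
    have : (Polynomial.C a * Polynomial.X ^ (k + 1)).eval (x:ℂ)
        = (Polynomial.C a * Polynomial.X ^ k).eval (x:ℂ) * (x:ℂ) := by
      simp [pow_succ]; ring
    rw [this, hp]
    simp
    ring

lemma IsCQE.re {g : ℝ → ℂ} (hg : IsCQE g) : IsQuasiExponential fun x => (g x).re := by
  obtain ⟨n, l, P, hP⟩ := hg
  choose p q hpq using fun j => poly_decomp (P j)
  refine ⟨n, fun j => (l j).re, fun j => (l j).im, p, fun j => -(q j), fun x => ?_⟩
  show (g x).re = _
  rw [hP x, Complex.re_sum]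
  refine Finset.sum_congr rfl fun j _ => ?_
  rw [hpq j x]
  simp [Complex.mul_re, Complex.mul_im, Complex.exp_re, Complex.exp_im]
  ring

lemma backward {n : ℕ} (A : Matrix (Fin n) (Fin n) ℝ) (b c : Fin n → ℝ) :
    IsQuasiExponential fun x => c ⬝ᵥ (exp (x • A) *ᵥ b) := by
  obtain ⟨n', al, om, p, q, h⟩ :=
    (cqe_matrix (A.map Complex.ofRealHom) (fun i => (c i : ℂ)) (fun i => (b i : ℂ))).re
  refine ⟨n', al, om, p, q, fun x => ?_⟩
  rw [← h x]
  -- show real value = re of complex value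
  letI : SeminormedRing (Matrix (Fin n) (Fin n) ℝ) := Matrix.linftyOpSemiNormedRing
  letI : NormedRing (Matrix (Fin n) (Fin n) ℝ) := Matrix.linftyOpNormedRing
  letI : NormedAlgebra ℝ (Matrix (Fin n) (Fin n) ℝ) := Matrix.linftyOpNormedAlgebra
  letI : SeminormedRing (Matrix (Fin n) (Fin n) ℂ) := Matrix.linftyOpSemiNormedRing
  letI : NormedRing (Matrix (Fin n) (Fin n) ℂ) := Matrix.linftyOpNormedRing
  letI : NormedAlgebra ℝ (Matrix (Fin n) (Fin n) ℂ) := Matrix.linftyOpNormedAlgebra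
  letI : NormedAlgebra ℚ (Matrix (Fin n) (Fin n) ℝ) :=
    { (inferInstance : Algebra ℚ (Matrix (Fin n) (Fin n) ℝ)) with
      norm_smul_le := (Matrix.linftyOpNormedAlgebra (R := ℚ)).norm_smul_le }
  have hcont : Continuous (Complex.ofRealAm.mapMatrix
      (m := Fin n) : Matrix (Fin n) (Fin n) ℝ →ₐ[ℝ] Matrix (Fin n) (Fin n) ℂ) := by
    show Continuous fun M : Matrix (Fin n) (Fin n) ℝ => M.map Complex.ofReal
    exact continuous_pi fun i => continuous_pi fun j =>
      Complex.continuous_ofReal.comp ((continuous_apply j).comp (continuous_apply i))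
  have hmap := map_exp (Complex.ofRealAm.mapMatrix
      (m := Fin n) : Matrix (Fin n) (Fin n) ℝ →ₐ[ℝ] Matrix (Fin n) (Fin n) ℂ) hcont (x • A)
  have hsm : (Complex.ofRealAm.mapMatrix (m := Fin n)) (x • A) = x • A.map Complex.ofRealHom := by
    show (x • A).map Complex.ofReal = _
    ext i j
    simp
  rw [hsm] at hmap
  show c ⬝ᵥ exp (x • A) *ᵥ b =
    ((fun i => (c i : ℂ)) ⬝ᵥ exp (x • A.map Complex.ofRealHom) *ᵥ fun i => (b i : ℂ)).re
  erw [← hmap]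
  show _ = ((fun i => (c i : ℂ)) ⬝ᵥ ((exp (x • A)).map Complex.ofReal *ᵥ fun i => (b i : ℂ))).re
  simp [Matrix.mulVec, dotProduct, Matrix.map_apply]


lemma hasDerivAt_exp_entry {ι : Type} [Fintype ι] [DecidableEq ι] (A : Matrix ι ι ℝ) (i j : ι) (t : ℝ) :
    HasDerivAt (fun x : ℝ => exp (x • A) i j) ((exp (t • A) * A) i j) t := by
  letI : SeminormedRing (Matrix ι ι ℝ) := Matrix.linftyOpSemiNormedRing
  letI : NormedRing (Matrix ι ι ℝ) := Matrix.linftyOpNormedRing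
  letI : NormedAlgebra ℝ (Matrix ι ι ℝ) := Matrix.linftyOpNormedAlgebra
  have h := hasDerivAt_exp_smul_const (𝕂 := ℝ) A t
  let L : Matrix ι ι ℝ →ₗ[ℝ] ℝ :=
    { toFun := fun M => M i j
      map_add' := fun _ _ => rfl
      map_smul' := fun _ _ => rfl }
  have := (LinearMap.toContinuousLinearMap L).hasFDerivAt
    (x := exp (t • A)) |>.comp_hasDerivAt t h
  exact this

lemma vec_ode {ι : Type} [Fintype ι] [DecidableEq ι] (A : Matrix ι ι ℝ) (g : ι → ℝ → ℝ)
    (hg : ∀ i x, HasDerivAt (g i) (∑ j, A i j * g j x) x) :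
    ∀ x i, g i x = (exp (x • A) *ᵥ (fun i => g i 0)) i := by
  have hconst : ∀ i x, ∑ j, exp ((-x) • A) i j * g j x = g i 0 := by
    intro i x
    have hderiv : ∀ y : ℝ, HasDerivAt (fun x => ∑ j, exp ((-x) • A) i j * g j x) 0 y := by
      intro y
      have hE : ∀ j, HasDerivAt (fun x : ℝ => exp ((-x) • A) i j)
          (-((exp ((-y) • A) * A) i j)) y := by
        intro j
        have h1 := (hasDerivAt_exp_entry A i j (-y)).comp y (hasDerivAt_neg y)
        simpa [Function.comp_def] using h1
      have hterm : ∀ j, HasDerivAt (fun x => exp ((-x) • A) i j * g j x)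
          (-((exp ((-y) • A) * A) i j) * g j y
            + exp ((-y) • A) i j * (∑ k, A j k * g k y)) y :=
        fun j => (hE j).mul (hg j y)
      have hsum := HasDerivAt.sum (fun j (_ : j ∈ Finset.univ) => hterm j)
      convert hsum using 1
      · rfl
      · rfl
      · funext z; simp [Finset.sum_apply]
      rw [Finset.sum_add_distrib]
      have h2 : ∑ j, exp ((-y) • A) i j * (∑ k, A j k * g k y)
          = ∑ k, ((exp ((-y) • A) * A) i k) * g k y := by
        simp_rw [Finset.mul_sum, Matrix.mul_apply, Finset.sum_mul]
        rw [Finset.sum_comm]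
        refine Finset.sum_congr rfl fun k _ => Finset.sum_congr rfl fun j _ => by ring
      rw [h2]
      simp [neg_mul]
    have hcst := is_const_of_deriv_eq_zero (f := fun x => ∑ j, exp ((-x) • A) i j * g j x)
      (fun y => (hderiv y).differentiableAt) (fun y => (hderiv y).deriv) x 0
    simpa [Matrix.one_apply] using hcst
  intro x i
  have hmv : exp ((-x) • A) *ᵥ (fun j => g j x) = fun i => g i 0 := by
    funext i
    exact hconst i x
  have hinv : exp (x • A) * exp (-(x • A)) = 1 := by
    rw [← neg_smul]
    letI : SeminormedRing (Matrix ι ι ℝ) := Matrix.linftyOpSemiNormedRing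
    letI : NormedRing (Matrix ι ι ℝ) := Matrix.linftyOpNormedRing
    letI : NormedAlgebra ℝ (Matrix ι ι ℝ) := Matrix.linftyOpNormedAlgebra
    rw [← Matrix.exp_add_of_commute _ _ (((Commute.refl A).smul_left x).smul_right (-x))]
    simp
  have := congrArg (fun v => (exp (x • A) *ᵥ v) i) hmv
  simpa [Matrix.mulVec_mulVec, neg_smul, hinv, Matrix.one_mulVec] using this

variable {n D : ℕ}

/-- The basis family of functions `x ^ k * exp (α j * x) * (cos/sin) (ω j * x)`. -/
def qeG (α ω : Fin n → ℝ) (D : ℕ) : (Fin n × Fin D × Bool) → ℝ → ℝ := fun i x =>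
  x ^ (i.2.1 : ℕ) * (Real.exp (α i.1 * x) *
    (if i.2.2 then Real.sin (ω i.1 * x) else Real.cos (ω i.1 * x)))

/-- The companion-style matrix for the family `qeG`. -/
def qeA (α ω : Fin n → ℝ) (D : ℕ) :
    Matrix (Fin n × Fin D × Bool) (Fin n × Fin D × Bool) ℝ :=
  Matrix.of fun i i' =>
    (if i' = (i.1, i.2.1, i.2.2) then α i.1 else 0)
    + (if i' = (i.1, i.2.1, !i.2.2) then (if i.2.2 then ω i.1 else -(ω i.1)) else 0)
    + (if ((i'.2.1 : ℕ) + 1 = (i.2.1 : ℕ) ∧ i'.1 = i.1 ∧ i'.2.2 = i.2.2)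
        then ((i.2.1 : ℕ) : ℝ) else 0)

lemma qe_sum (α ω : Fin n → ℝ) (j : Fin n) (k : Fin D) (s : Bool) (x : ℝ) :
    ∑ i', qeA α ω D (j, k, s) i' * qeG α ω D i' x =
      α j * qeG α ω D (j, k, s) x
      + (if s then ω j else -(ω j)) * qeG α ω D (j, k, !s) x
      + ((k : ℕ) : ℝ) * (x ^ ((k : ℕ) - 1) * (Real.exp (α j * x) *
          (if s then Real.sin (ω j * x) else Real.cos (ω j * x)))) := by
  have hsplit : ∀ i', qeA α ω D (j, k, s) i' * qeG α ω D i' x =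
      (if i' = (j, k, s) then α j * qeG α ω D i' x else 0)
      + (if i' = (j, k, !s) then (if s then ω j else -(ω j)) * qeG α ω D i' x else 0)
      + (if ((i'.2.1 : ℕ) + 1 = (k : ℕ) ∧ i'.1 = j ∧ i'.2.2 = s)
          then ((k : ℕ) : ℝ) * qeG α ω D i' x else 0) := by
    intro i'
    simp only [qeA, Matrix.of_apply]
    split_ifs <;> ring
  simp_rw [hsplit]
  rw [Finset.sum_add_distrib, Finset.sum_add_distrib,
    Finset.sum_ite_eq' Finset.univ ((j, k, s) : Fin n × Fin D × Bool),
    Finset.sum_ite_eq' Finset.univ ((j, k, !s) : Fin n × Fin D × Bool)]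
  simp only [Finset.mem_univ, if_true]
  congr 1
  rcases hk : (k : ℕ) with _ | m
  · rw [Finset.sum_eq_zero]
    · simp
    · intro i' _
      rw [if_neg]
      rintro ⟨h1, -, -⟩
      omega
  · have hmD : m < D := by have := k.isLt; omega
    have hcond : ∀ i' : Fin n × Fin D × Bool,
        ((i'.2.1 : ℕ) + 1 = m + 1 ∧ i'.1 = j ∧ i'.2.2 = s) ↔ i' = (j, ⟨m, hmD⟩, s) := by
      rintro ⟨j', k', s'⟩
      simp only [Prod.mk.injEq, Fin.ext_iff]
      constructor
      · rintro ⟨h1, h2, h3⟩; exact ⟨h2, by omega, h3⟩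
      · rintro ⟨h1, h2, h3⟩; exact ⟨by omega, h1, h3⟩
    rw [Finset.sum_congr rfl (fun i' _ => if_congr (hcond i') rfl rfl)]
    rw [Finset.sum_ite_eq' Finset.univ ((j, ⟨m, hmD⟩, s) : Fin n × Fin D × Bool)]
    simp only [Finset.mem_univ, if_true]
    simp [qeG]

lemma qe_hasDerivAt (α ω : Fin n → ℝ) (i : Fin n × Fin D × Bool) (x : ℝ) :
    HasDerivAt (qeG α ω D i) (∑ i', qeA α ω D i i' * qeG α ω D i' x) x := by
  rcases i with ⟨j, k, s⟩
  rw [qe_sum]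
  have hexp : HasDerivAt (fun x : ℝ => Real.exp (α j * x)) (Real.exp (α j * x) * α j) x := by
    simpa using (((hasDerivAt_id x).const_mul (α j)).exp)
  have hlin : HasDerivAt (fun x : ℝ => ω j * x) (ω j) x := by
    simpa using ((hasDerivAt_id x).const_mul (ω j))
  have hpow := hasDerivAt_pow (k : ℕ) x
  cases s
  · have h := hpow.mul (hexp.mul hlin.cos)
    convert h using 1
    · rfl
    · rfl
    · funext z; simp [qeG]
    simp only [qeG, Bool.not_false, Bool.false_eq_true, if_false, if_true, Pi.mul_apply]
    ring
  · have h := hpow.mul (hexp.mul hlin.sin)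
    convert h using 1
    · rfl
    · rfl
    · funext z; simp [qeG]
    simp only [qeG, Bool.not_true, Bool.false_eq_true, if_false, if_true, Pi.mul_apply]
    ring

lemma reindex_form {ι : Type} [Fintype ι] [DecidableEq ι] (A : Matrix ι ι ℝ) (b c : ι → ℝ) :
    ∃ (N : ℕ) (A' : Matrix (Fin N) (Fin N) ℝ) (b' c' : Fin N → ℝ),
      ∀ x : ℝ, c ⬝ᵥ (exp (x • A) *ᵥ b) = c' ⬝ᵥ (exp (x • A') *ᵥ b') := by
  letI : SeminormedRing (Matrix ι ι ℝ) := Matrix.linftyOpSemiNormedRing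
  letI : NormedRing (Matrix ι ι ℝ) := Matrix.linftyOpNormedRing
  letI : NormedAlgebra ℝ (Matrix ι ι ℝ) := Matrix.linftyOpNormedAlgebra
  set N := Fintype.card ι with hN
  letI : SeminormedRing (Matrix (Fin N) (Fin N) ℝ) := Matrix.linftyOpSemiNormedRing
  letI : NormedRing (Matrix (Fin N) (Fin N) ℝ) := Matrix.linftyOpNormedRing
  letI : NormedAlgebra ℝ (Matrix (Fin N) (Fin N) ℝ) := Matrix.linftyOpNormedAlgebra
  letI : NormedAlgebra ℚ (Matrix ι ι ℝ) :=
    { (inferInstance : Algebra ℚ (Matrix ι ι ℝ)) with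
      norm_smul_le := (Matrix.linftyOpNormedAlgebra (R := ℚ)).norm_smul_le }
  set e : ι ≃ Fin N := Fintype.equivFin ι with he
  have hcont : Continuous (Matrix.reindexAlgEquiv ℝ ℝ e :
      Matrix ι ι ℝ →+* Matrix (Fin N) (Fin N) ℝ) := by
    refine continuous_pi fun i => continuous_pi fun j => ?_
    exact (continuous_apply (e.symm j)).comp (continuous_apply (e.symm i))
  refine ⟨N, A.submatrix e.symm e.symm, b ∘ e.symm, c ∘ e.symm, fun x => ?_⟩
  have hmap := map_exp (Matrix.reindexAlgEquiv ℝ ℝ e :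
      Matrix ι ι ℝ →+* Matrix (Fin N) (Fin N) ℝ) hcont (x • A)
  have hsm : (Matrix.reindexAlgEquiv ℝ ℝ e :
      Matrix ι ι ℝ →+* Matrix (Fin N) (Fin N) ℝ) (x • A) = x • A.submatrix e.symm e.symm := by
    ext i j
    simp [Matrix.reindexAlgEquiv_apply, Matrix.submatrix_apply]
  have h1 : exp (x • A.submatrix (e.symm : Fin N → ι) (e.symm : Fin N → ι))
      = (exp (x • A)).submatrix e.symm e.symm := by
    erw [← hsm, ← hmap]; rfl
  rw [h1]
  rw [show ((b ∘ e.symm : Fin N → ℝ)) = b ∘ (e.symm : Fin N → ι) from rfl]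
  rw [Matrix.submatrix_mulVec_equiv (exp (x • A)) _ (e.symm : Fin N → ι) e.symm]
  have hb : ((b ∘ (e.symm : Fin N → ι)) ∘ (e.symm.symm : ι → Fin N)) = b := by
    funext i; simp
  rw [hb]
  simp only [dotProduct, Function.comp_apply]
  exact (Equiv.sum_comp e.symm fun i => c i * (exp (x • A) *ᵥ b) i).symm

theorem QEforward {f : ℝ → ℝ} (h : IsQuasiExponential f) :
    ∃ (N : ℕ) (A : Matrix (Fin N) (Fin N) ℝ) (b c : Fin N → ℝ),
      ∀ x : ℝ, f x = c ⬝ᵥ (exp (x • A) *ᵥ b) := by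
  obtain ⟨n, α, ω, p, q, hf⟩ := h
  set D : ℕ := 1 + ∑ j, ((p j).natDegree + (q j).natDegree) with hD
  have hpD : ∀ j, (p j).natDegree < D := by
    intro j
    have h1 := Finset.single_le_sum (f := fun j => (p j).natDegree + (q j).natDegree)
      (fun _ _ => Nat.zero_le _) (Finset.mem_univ j)
    omega
  have hqD : ∀ j, (q j).natDegree < D := by
    intro j
    have h1 := Finset.single_le_sum (f := fun j => (p j).natDegree + (q j).natDegree)
      (fun _ _ => Nat.zero_le _) (Finset.mem_univ j)
    omega
  set c : (Fin n × Fin D × Bool) → ℝ :=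
    fun i => if i.2.2 then (q i.1).coeff (i.2.1 : ℕ) else (p i.1).coeff (i.2.1 : ℕ) with hc
  have key : ∀ x : ℝ, f x = c ⬝ᵥ (exp (x • qeA α ω D) *ᵥ (fun i => qeG α ω D i 0)) := by
    intro x
    have hode := vec_ode (qeA α ω D) (qeG α ω D) (fun i x => qe_hasDerivAt α ω i x)
    have : c ⬝ᵥ (exp (x • qeA α ω D) *ᵥ (fun i => qeG α ω D i 0))
        = ∑ i, c i * qeG α ω D i x := by
      simp only [dotProduct]
      exact Finset.sum_congr rfl fun i _ => by rw [← hode x i]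
    rw [this, hf x]
    rw [Fintype.sum_prod_type]
    refine Finset.sum_congr rfl fun j _ => ?_
    rw [Fintype.sum_prod_type]
    have hsum : ∀ k : Fin D, ∑ s : Bool, c (j, k, s) * qeG α ω D (j, k, s) x
        = (p j).coeff (k : ℕ) * (x ^ (k : ℕ) * (Real.exp (α j * x) * Real.cos (ω j * x)))
        + (q j).coeff (k : ℕ) * (x ^ (k : ℕ) * (Real.exp (α j * x) * Real.sin (ω j * x))) := by
      intro k
      rw [Fintype.sum_bool]
      simp only [hc, qeG, Bool.false_eq_true, if_true, if_false]
      ring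
    rw [Finset.sum_congr rfl fun k _ => hsum k]
    rw [Finset.sum_add_distrib]
    rw [Polynomial.eval_eq_sum_range' (hpD j), Polynomial.eval_eq_sum_range' (hqD j)]
    rw [← Fin.sum_univ_eq_sum_range (fun m => (p j).coeff m * x ^ m) D,
      ← Fin.sum_univ_eq_sum_range (fun m => (q j).coeff m * x ^ m) D]
    rw [mul_add]
    congr 1 <;>
    · rw [Finset.sum_mul, Finset.mul_sum]
      exact Finset.sum_congr rfl fun m _ => by ring
  obtain ⟨N, A', b', c', hre⟩ := reindex_form (qeA α ω D) (fun i => qeG α ω D i 0) c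
  exact ⟨N, A', b', c', fun x => (key x).trans (hre x)⟩

end QEAux

/-- A function `f : ℝ → ℝ` is quasi-exponential if and only if there are
`n ∈ ℕ`, a matrix `A ∈ ℝ^{n×n}` and vectors `b, c ∈ ℝ^n` with `f x = c ⬝ (e^{Ax} b)` for
all `x ∈ ℝ`. -/
theorem stmt6 (f : ℝ → ℝ) :
    IsQuasiExponential f ↔
      ∃ (n : ℕ) (A : Matrix (Fin n) (Fin n) ℝ) (b c : Fin n → ℝ),
        ∀ x : ℝ, f x = c ⬝ᵥ (NormedSpace.exp (x • A) *ᵥ b) := by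
  constructor
  · exact fun h => QEforward h
  · rintro ⟨n, A, b, c, h⟩
    obtain ⟨n', al, om, p, q, hrep⟩ := backward A b c
    exact ⟨n', al, om, p, q, fun x => (h x).trans (hrep x)⟩
end
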